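/- Let (E^σ_m) and (F^σ_m) be two families of multifiltrations of the same finite-dimensional ℂ-vector space V with E^σ_m ⊆ F^σ_m for every cone σ ∈ Σ and every m ∈ M. Then there exist finitely many families of multifiltrations E = E_0, E_1, …, E_p = F of V with E_i pointwise contained in E_{i+1} for each i, such that every consecutive inclusion E_i ⊆ E_{i+1} is an elementary injection; moreover the factorization can be chosen so that the dimension parameters k_i of the elementary injections E_i ⊆ E_{i+1} are nonincreasing in i. -/

import Mathlib

open Finset
set_option linter.unusedSectionVars false
set_option linter.unusedVariables false
set_option maxHeartbeats 1000000

namespace Toric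

/-- Primitive ray generators of the fan of `ℙⁿ`: `u 0 = -(e₁+⋯+eₙ)` and `u (i+1) = e_{i+1}`. -/
def uGen (n : ℕ) : Fin (n + 1) → Fin n → ℤ :=
  Fin.cons (fun _ => -1) fun k => Pi.single k 1

/-- The duality pairing `⟨m, u_i⟩` for `m ∈ M = ℤⁿ`. -/
def pair (n : ℕ) (m : Fin n → ℤ) (i : Fin (n + 1)) : ℤ :=
  ∑ j, m j * uGen n i j

/-- A cone of the fan of `ℙⁿ`: a proper subset of the set `{0, …, n}` of rays. -/
abbrev Cone (n : ℕ) : Type := {I : Finset (Fin (n + 1)) // I ≠ Finset.univ}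

/-- `m ≤_σ m'`, i.e. `m' - m ∈ σ^∨`. -/
def dualLe (n : ℕ) (σ : Cone n) (m m' : Fin n → ℤ) : Prop :=
  ∀ i ∈ σ.1, 0 ≤ pair n (m' - m) i

/-- `m ∈ σ^⊥`. -/
def inPerp (n : ℕ) (σ : Cone n) (m : Fin n → ℤ) : Prop :=
  ∀ i ∈ σ.1, pair n m i = 0

/-- `m <_σ m'`, i.e. `m ≤_σ m'` and `m' - m ∉ σ^⊥`. -/
def dualLt (n : ℕ) (σ : Cone n) (m m' : Fin n → ℤ) : Prop :=
  dualLe n σ m m' ∧ ¬ inPerp n σ (m' - m)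

/-- A family of multifiltrations of the `ℂ`-vector space `V`, indexed by the cones of the fan
of `ℙⁿ` and the characters `m ∈ M`. -/
structure MultiFilt (n : ℕ) (V : Type) [AddCommGroup V] [Module ℂ V] : Type where
  E : Cone n → (Fin n → ℤ) → Submodule ℂ V
  mono : ∀ σ m m', dualLe n σ m m' → E σ m ≤ E σ m'
  top_of_empty : ∀ σ : Cone n, σ.1 = ∅ → ∀ m, E σ m = ⊤
  chain_bot : ∀ (σ : Cone n) (ms : ℤ → Fin n → ℤ),
    (∀ i : ℤ, dualLt n σ (ms (i - 1)) (ms i)) →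
    ∃ i₀ : ℤ, ∀ i ≤ i₀, E σ (ms i) = ⊥
  finite_support : ∃ S : Finset (Cone n × (Fin n → ℤ)), ∀ (σ : Cone n) (m : Fin n → ℤ),
    ¬ (E σ m : Set V) ⊆ (⋃ m' ∈ {m' | dualLt n σ m' m}, (E σ m' : Set V)) →
    ∃ q ∈ S, q.1 = σ ∧ inPerp n σ (m - q.2)
  facet_union : ∀ σ τ : Cone n, τ.1 ⊆ σ.1 → τ.1.card + 1 = σ.1.card →
    ∀ mτ : Fin n → ℤ, dualLe n σ 0 mτ → inPerp n τ mτ →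
    (∀ w : Fin n → ℤ, inPerp n τ w ↔ ∃ (v : Fin n → ℤ) (k : ℤ), inPerp n σ v ∧ w = v + k • mτ) →
    ∀ m, E τ m = ⨆ i : ℕ, E σ (m + (i : ℤ) • mτ)

/-- A pointwise injection `E ⊆ F` of families of multifiltrations is elementary with
parameters `(k₀, σ₀, m₀)`. -/
structure IsElementary {n : ℕ} {V : Type} [AddCommGroup V] [Module ℂ V]
    (E F : MultiFilt n V) (k₀ : ℕ) (σ₀ : Cone n) (m₀ : Fin n → ℤ) : Prop where
  le : ∀ σ m, E.E σ m ≤ F.E σ m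
  dim : σ₀.1.card = k₀
  eq_of_lt : ∀ σ m, σ.1.card < k₀ → E.E σ m = F.E σ m
  ne_iff : ∀ (σ : Cone n) (m : Fin n → ℤ), σ.1.card = k₀ →
    (E.E σ m ≠ F.E σ m ↔ σ = σ₀ ∧ inPerp n σ₀ (m - m₀))
  rank_step : Module.finrank ℂ (F.E σ₀ m₀) = Module.finrank ℂ (E.E σ₀ m₀) + 1
  eq_of_gt : ∀ σ m, k₀ < σ.1.card → ¬(σ₀.1 ⊂ σ.1 ∧ dualLe n σ₀ m m₀) → E.E σ m = F.E σ m
  inf_of_gt : ∀ σ m, k₀ < σ.1.card → σ₀.1 ⊂ σ.1 → dualLe n σ₀ m m₀ →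
    E.E σ m = F.E σ m ⊓ E.E σ₀ m₀








-- ### pairing algebra
lemma pair_zero_idx (n : ℕ) (m : Fin n → ℤ) : pair n m 0 = -∑ j, m j := by
  simp [pair, uGen, Fin.cons_zero]

lemma pair_succ (n : ℕ) (m : Fin n → ℤ) (k : Fin n) : pair n m k.succ = m k := by
  simp [pair, uGen, Fin.cons_succ, Pi.single_apply, mul_ite]

lemma pair_add (n : ℕ) (a b : Fin n → ℤ) (i : Fin (n+1)) :
    pair n (a + b) i = pair n a i + pair n b i := by
  simp [pair, add_mul, Finset.sum_add_distrib]

lemma pair_sub (n : ℕ) (a b : Fin n → ℤ) (i : Fin (n+1)) :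
    pair n (a - b) i = pair n a i - pair n b i := by
  simp [pair, sub_mul, Finset.sum_sub_distrib]

lemma pair_smul (n : ℕ) (k : ℤ) (a : Fin n → ℤ) (i : Fin (n+1)) :
    pair n (k • a) i = k * pair n a i := by
  simp [pair, Finset.mul_sum, mul_assoc]

lemma pair_zero (n : ℕ) (i : Fin (n+1)) : pair n 0 i = 0 := by simp [pair]

lemma pair_neg (n : ℕ) (a : Fin n → ℤ) (i : Fin (n+1)) : pair n (-a) i = - pair n a i := by
  simp [pair, Finset.sum_neg_distrib]


-- dual vectors
lemma exists_dual (n : ℕ) (σ : Cone n) (i : Fin (n+1)) (hi : i ∈ σ.1) :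
    ∃ d : Fin n → ℤ, pair n d i = 1 ∧ ∀ j ∈ σ.1, j ≠ i → pair n d j = 0 := by
  classical
  -- an element outside σ, different from 0 when 0 ∈ σ
  have hex : ∃ a, a ∉ σ.1 := by
    by_contra h
    push_neg at h
    exact σ.2 (Finset.eq_univ_iff_forall.2 h)
  rcases Fin.eq_zero_or_eq_succ i with hi0 | ⟨j, hj⟩
  · -- i = 0
    subst hi0
    obtain ⟨a, ha⟩ := hex
    have ha0 : a ≠ 0 := fun h => ha (h ▸ hi)
    obtain ⟨ℓ, hℓ⟩ := Fin.eq_succ_of_ne_zero ha0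
    refine ⟨-Pi.single ℓ 1, ?_, ?_⟩
    · rw [pair_zero_idx]; simp
    · intro j hj hji
      obtain ⟨k, hk⟩ := Fin.eq_succ_of_ne_zero hji
      subst hk
      rw [pair_succ]
      have : k ≠ ℓ := by
        rintro rfl
        exact ha (hℓ ▸ hj)
      simp [Pi.single_apply, this]
  · subst hj
    by_cases h0 : (0 : Fin (n+1)) ∈ σ.1
    · obtain ⟨a, ha⟩ := hex
      have ha0 : a ≠ 0 := fun h => ha (h ▸ h0)
      obtain ⟨ℓ, hℓ⟩ := Fin.eq_succ_of_ne_zero ha0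
      have hℓj : ℓ ≠ j := by
        rintro rfl
        exact ha (hℓ ▸ hi)
      refine ⟨Pi.single j 1 - Pi.single ℓ 1, ?_, ?_⟩
      · rw [pair_succ]; simp [Pi.single_apply, hℓj.symm]
      · intro l hl hlj
        rcases Fin.eq_zero_or_eq_succ l with rfl | ⟨k, rfl⟩
        · rw [pair_zero_idx]; simp
        · rw [pair_succ]
          have hkj : k ≠ j := fun h => hlj (by rw [h])
          have hkl : k ≠ ℓ := by
            rintro rfl
            exact ha (hℓ ▸ hl)
          simp [Pi.single_apply, hkj, hkl]
    · refine ⟨Pi.single j 1, ?_, ?_⟩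
      · rw [pair_succ]; simp
      · intro l hl hlj
        rcases Fin.eq_zero_or_eq_succ l with rfl | ⟨k, rfl⟩
        · exact absurd hl h0
        · rw [pair_succ]
          have hkj : k ≠ j := fun h => hlj (by rw [h])
          simp [Pi.single_apply, hkj]

noncomputable def dvec (n : ℕ) (σ : Cone n) (i : Fin (n+1)) : Fin n → ℤ :=
  if h : i ∈ σ.1 then Classical.choose (exists_dual n σ i h) else 0

lemma dvec_self (n : ℕ) (σ : Cone n) (i : Fin (n+1)) (hi : i ∈ σ.1) :
    pair n (dvec n σ i) i = 1 := by
  rw [dvec, dif_pos hi]; exact (Classical.choose_spec (exists_dual n σ i hi)).1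

lemma dvec_other (n : ℕ) (σ : Cone n) (i : Fin (n+1)) (hi : i ∈ σ.1)
    {j : Fin (n+1)} (hj : j ∈ σ.1) (hji : j ≠ i) : pair n (dvec n σ i) j = 0 := by
  rw [dvec, dif_pos hi]; exact (Classical.choose_spec (exists_dual n σ i hi)).2 j hj hji



-- ### order lemmas
variable {n : ℕ}

lemma dualLe_iff (σ : Cone n) (m m' : Fin n → ℤ) :
    dualLe n σ m m' ↔ ∀ i ∈ σ.1, pair n m i ≤ pair n m' i := by
  unfold dualLe
  constructor <;> intro h i hi <;> have := h i hi <;> rw [pair_sub] at * <;> omega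

lemma inPerp_sub_iff (σ : Cone n) (m m' : Fin n → ℤ) :
    inPerp n σ (m' - m) ↔ ∀ i ∈ σ.1, pair n m i = pair n m' i := by
  unfold inPerp
  constructor <;> intro h i hi <;> have := h i hi <;> rw [pair_sub] at * <;> omega

lemma dualLe_refl (σ : Cone n) (m : Fin n → ℤ) : dualLe n σ m m := by
  intro i hi; rw [pair_sub]; omega

lemma dualLe_trans {σ : Cone n} {a b c : Fin n → ℤ} (h1 : dualLe n σ a b)
    (h2 : dualLe n σ b c) : dualLe n σ a c := by
  rw [dualLe_iff] at *
  intro i hi; exact le_trans (h1 i hi) (h2 i hi)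

lemma dualLe_of_inPerp {σ : Cone n} {m m' : Fin n → ℤ} (h : inPerp n σ (m' - m)) :
    dualLe n σ m m' := by
  rw [dualLe_iff]; rw [inPerp_sub_iff] at h
  intro i hi; exact (h i hi).le

lemma dualLe_of_inPerp' {σ : Cone n} {m m' : Fin n → ℤ} (h : inPerp n σ (m' - m)) :
    dualLe n σ m' m := by
  rw [dualLe_iff]; rw [inPerp_sub_iff] at h
  intro i hi; exact (h i hi).ge

lemma dualLe_mono_cone {σ τ : Cone n} (hsub : τ.1 ⊆ σ.1) {m m' : Fin n → ℤ}
    (h : dualLe n σ m m') : dualLe n τ m m' := fun i hi => h i (hsub hi)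

-- faces
lemma face_ne_univ (σ : Cone n) (i : Fin (n+1)) : σ.1.erase i ≠ Finset.univ := by
  intro h
  apply σ.2
  apply Finset.eq_univ_iff_forall.2
  intro x
  exact (Finset.erase_subset i σ.1) (by rw [h]; exact Finset.mem_univ x)

def face (σ : Cone n) (i : Fin (n+1)) : Cone n := ⟨σ.1.erase i, face_ne_univ σ i⟩

lemma pair_dvec_nonneg (σ : Cone n) {i : Fin (n+1)} (hi : i ∈ σ.1)
    {j : Fin (n+1)} (hj : j ∈ σ.1) : 0 ≤ pair n (dvec n σ i) j := by
  rcases eq_or_ne j i with rfl | hne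
  · rw [dvec_self n σ j hi]; norm_num
  · rw [dvec_other n σ i hi hj hne]

lemma dualLe_add_smul_dvec (σ : Cone n) {i : Fin (n+1)} (hi : i ∈ σ.1)
    (m : Fin n → ℤ) {k : ℤ} (hk : 0 ≤ k) : dualLe n σ m (m + k • dvec n σ i) := by
  rw [dualLe_iff]
  intro j hj
  rw [pair_add, pair_smul]
  have := pair_dvec_nonneg σ hi hj
  nlinarith

variable {V : Type} [AddCommGroup V] [Module ℂ V]

lemma mf_congr (mf : MultiFilt n V) (σ : Cone n) {m m' : Fin n → ℤ}
    (h : inPerp n σ (m' - m)) : mf.E σ m = mf.E σ m' :=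
  le_antisymm (mf.mono σ m m' (dualLe_of_inPerp h)) (mf.mono σ m' m (dualLe_of_inPerp' h))

-- the facet union along the canonical dual vector
lemma mf_facet (mf : MultiFilt n V) (σ : Cone n) {i : Fin (n+1)} (hi : i ∈ σ.1)
    (m : Fin n → ℤ) :
    mf.E (face σ i) m = ⨆ k : ℕ, mf.E σ (m + (k : ℤ) • dvec n σ i) := by
  apply mf.facet_union σ (face σ i) (Finset.erase_subset i σ.1)
    (by simpa [face] using Finset.card_erase_add_one hi)
  · intro j hj
    rw [pair_sub, pair_zero]
    have := pair_dvec_nonneg σ hi hj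
    omega
  · intro j hj
    simp only [face, Finset.mem_erase] at hj
    exact dvec_other n σ i hi hj.2 hj.1
  · intro w
    constructor
    · intro hw
      refine ⟨w - (pair n w i) • dvec n σ i, pair n w i, ?_, by abel⟩
      intro j hj
      rw [pair_sub, pair_smul]
      rcases eq_or_ne j i with rfl | hne
      · rw [dvec_self n σ j hi]; ring
      · rw [dvec_other n σ i hi hj hne, hw j (by simp [face, Finset.mem_erase, hne, hj])]
        ring
    · rintro ⟨v, k, hv, rfl⟩
      intro j hj
      simp only [face, Finset.mem_erase] at hj
      rw [pair_add, pair_smul, hv j hj.2, dvec_other n σ i hi hj.2 hj.1]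
      ring

-- general facet union along a dual vector of a bigger cone
lemma mf_facet' (mf : MultiFilt n V) (σbig ρ : Cone n) (hsub : ρ.1 ⊆ σbig.1)
    {i : Fin (n+1)} (hiσ : i ∈ σbig.1) (hiρ : i ∈ ρ.1) (m : Fin n → ℤ) :
    mf.E (face ρ i) m = ⨆ k : ℕ, mf.E ρ (m + (k : ℤ) • dvec n σbig i) := by
  apply mf.facet_union ρ (face ρ i) (Finset.erase_subset i ρ.1)
    (by simpa [face] using Finset.card_erase_add_one hiρ)
  · intro j hj
    rw [pair_sub, pair_zero]
    have := pair_dvec_nonneg σbig hiσ (hsub hj)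
    omega
  · intro j hj
    simp only [face, Finset.mem_erase] at hj
    exact dvec_other n σbig i hiσ (hsub hj.2) hj.1
  · intro w
    constructor
    · intro hw
      refine ⟨w - (pair n w i) • dvec n σbig i, pair n w i, ?_, by abel⟩
      intro j hj
      rw [pair_sub, pair_smul]
      rcases eq_or_ne j i with rfl | hne
      · rw [dvec_self n σbig j hiσ]; ring
      · rw [dvec_other n σbig i hiσ (hsub hj) hne,
          hw j (by simp [face, Finset.mem_erase, hne, hj])]
        ring
    · rintro ⟨v, k, hv, rfl⟩
      intro j hj
      simp only [face, Finset.mem_erase] at hj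
      rw [pair_add, pair_smul, hv j hj.2, dvec_other n σbig i hiσ (hsub hj.2) hj.1]
      ring

lemma dualLe_chain_d (σbig ρ : Cone n) (hsub : ρ.1 ⊆ σbig.1) {i : Fin (n+1)}
    (hiσ : i ∈ σbig.1) (m : Fin n → ℤ) {a b : ℤ} (hab : a ≤ b) :
    dualLe n ρ (m + a • dvec n σbig i) (m + b • dvec n σbig i) := by
  intro j hj
  rw [pair_sub, pair_add, pair_add, pair_smul, pair_smul]
  have := pair_dvec_nonneg σbig hiσ (hsub hj)
  nlinarith

lemma inPerp_d_erase (σbig ρ : Cone n) (hsub : ρ.1 ⊆ σbig.1) {i : Fin (n+1)}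
    (hiσ : i ∈ σbig.1) (m : Fin n → ℤ) (k : ℤ) (l : Fin (n+1)) :
    inPerp n (face ρ l) ((m + k • dvec n σbig i) - m) ∨ i ∈ (face ρ l).1 := by
  by_cases hil : i ∈ (face ρ l).1
  · exact Or.inr hil
  · left
    intro j hj
    have hji : j ≠ i := fun h => hil (h ▸ hj)
    simp only [face, Finset.mem_erase] at hj
    rw [pair_sub, pair_add, pair_smul, dvec_other n σbig i hiσ (hsub hj.2) hji]
    ring

lemma face_face (σ : Cone n) (l i : Fin (n+1)) :
    face (face σ l) i = face (face σ i) l := by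
  apply Subtype.ext
  simp only [face]
  exact Finset.erase_right_comm

-- stabilization of monotone chains of submodules
lemma sup_stab [FiniteDimensional ℂ V] (f : ℕ → Submodule ℂ V) (hf : Monotone f) :
    ∃ K, (∀ k, f k ≤ f K) ∧ (⨆ k, f k) = f K := by
  obtain ⟨K, hK⟩ := (monotone_stabilizes_iff_noetherian.2 inferInstance) ⟨f, hf⟩
  refine ⟨K, fun k => ?_, ?_⟩
  · rcases le_total k K with h | h
    · exact hf h
    · exact (hK k h).ge
  · apply le_antisymm
    · apply iSup_le
      intro k
      rcases le_total k K with h | h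
      · exact hf h
      · exact (hK k h).ge
    · exact le_iSup f K

lemma mf_face_le_one [FiniteDimensional ℂ V] (mf : MultiFilt n V) (σ : Cone n)
    {i : Fin (n+1)} (hi : i ∈ σ.1) (m : Fin n → ℤ) :
    mf.E σ m ≤ mf.E (face σ i) m := by
  rw [mf_facet mf σ hi m]
  have : mf.E σ m = mf.E σ (m + ((0:ℕ) : ℤ) • dvec n σ i) := by norm_num
  rw [this]
  exact le_iSup (fun k : ℕ => mf.E σ (m + (k : ℤ) • dvec n σ i)) 0

lemma mf_face_attained [FiniteDimensional ℂ V] (mf : MultiFilt n V) (σ : Cone n)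
    {i : Fin (n+1)} (hi : i ∈ σ.1) (m : Fin n → ℤ) :
    ∃ K : ℕ, mf.E (face σ i) m = mf.E σ (m + (K : ℤ) • dvec n σ i) ∧
      ∀ k : ℕ, K ≤ k → mf.E σ (m + (k : ℤ) • dvec n σ i) = mf.E σ (m + (K : ℤ) • dvec n σ i) := by
  have hmono : Monotone (fun k : ℕ => mf.E σ (m + (k : ℤ) • dvec n σ i)) := by
    intro a b hab
    apply mf.mono
    rw [dualLe_iff]
    intro j hj
    rw [pair_add, pair_add, pair_smul, pair_smul]
    have := pair_dvec_nonneg σ hi hj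
    have : (a:ℤ) ≤ (b:ℤ) := by exact_mod_cast hab
    nlinarith [pair_dvec_nonneg σ hi hj]
  obtain ⟨K, hK1, hK2⟩ := sup_stab _ hmono
  refine ⟨K, ?_, fun k hk => le_antisymm (hK1 k) (hmono hk)⟩
  rw [mf_facet mf σ hi m, hK2]

-- general face monotonicity
lemma mf_face_mono [FiniteDimensional ℂ V] (mf : MultiFilt n V) :
    ∀ (σ τ : Cone n), τ.1 ⊆ σ.1 → ∀ m, mf.E σ m ≤ mf.E τ m := by
  suffices h : ∀ (c : ℕ) (σ τ : Cone n), σ.1.card = c → τ.1 ⊆ σ.1 → ∀ m, mf.E σ m ≤ mf.E τ m by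
    intro σ τ hsub m; exact h σ.1.card σ τ rfl hsub m
  intro c
  induction c using Nat.strong_induction_on with
  | _ c IH =>
    intro σ τ hs hsub m
    rcases eq_or_ne τ σ with rfl | hne
    · exact le_rfl
    · have : ∃ i ∈ σ.1, i ∉ τ.1 := by
        by_contra h
        push_neg at h
        exact hne (Subtype.ext (Finset.Subset.antisymm hsub h))
      obtain ⟨i, hi, hit⟩ := this
      have h1 : mf.E σ m ≤ mf.E (face σ i) m := mf_face_le_one mf σ hi m
      have h2 : τ.1 ⊆ (face σ i).1 := fun x hx =>
        Finset.mem_erase.2 ⟨fun h => hit (h ▸ hx), hsub hx⟩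
      have hcard : (face σ i).1.card < c := by
        rw [← hs]
        simpa [face] using Finset.card_erase_lt_of_mem hi
      exact le_trans h1 (IH _ hcard (face σ i) τ rfl h2 m)

-- ### sum pairing, Dsum, realization
lemma pair_sum {α : Type*} (s : Finset α) (g : α → Fin n → ℤ) (j : Fin (n+1)) :
    pair n (∑ i ∈ s, g i) j = ∑ i ∈ s, pair n (g i) j := by
  classical
  induction s using Finset.induction_on with
  | empty => simp [pair]
  | insert _ _ hx ih =>
    rw [Finset.sum_insert hx, pair_add, ih, Finset.sum_insert hx]

noncomputable def Dsum (σ : Cone n) : Fin n → ℤ := ∑ i ∈ σ.1, dvec n σ i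

lemma pair_Dsum (σ : Cone n) {j : Fin (n+1)} (hj : j ∈ σ.1) : pair n (Dsum σ) j = 1 := by
  classical
  rw [Dsum, pair_sum]
  rw [Finset.sum_eq_single j]
  · exact dvec_self n σ j hj
  · intro i hi hij
    exact dvec_other n σ i hi hj (Ne.symm hij)
  · intro h; exact absurd hj h

noncomputable def rvec (σ : Cone n) (c : Fin (n+1) → ℤ) : Fin n → ℤ :=
  ∑ i ∈ σ.1, c i • dvec n σ i

lemma pair_rvec (σ : Cone n) (c : Fin (n+1) → ℤ) {j : Fin (n+1)} (hj : j ∈ σ.1) :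
    pair n (rvec σ c) j = c j := by
  classical
  rw [rvec, pair_sum]
  rw [Finset.sum_eq_single j]
  · rw [pair_smul, dvec_self n σ j hj]; ring
  · intro i hi hij
    rw [pair_smul, dvec_other n σ i hi hj (Ne.symm hij)]; ring
  · intro h; exact absurd hj h

-- ### descent to a minimal point
lemma descend_min (mf : MultiFilt n V) (σ : Cone n) (m : Fin n → ℤ) (y : V)
    (hy : y ∈ mf.E σ m) (hy0 : y ≠ 0) :
    ∃ j, dualLe n σ j m ∧ y ∈ mf.E σ j ∧ ∀ j', dualLt n σ j' j → y ∉ mf.E σ j' := by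
  classical
  by_cases hσ : σ.1 = ∅
  · refine ⟨m, dualLe_refl σ m, hy, fun j' hj' _ => ?_⟩
    exact hj'.2 (fun i hi => absurd (hσ ▸ hi) (Finset.notMem_empty i))
  · by_contra hcon
    push_neg at hcon
    -- every admissible point has a strictly smaller admissible point
    have hstep : ∀ s : {j : Fin n → ℤ // dualLe n σ j m ∧ y ∈ mf.E σ j},
        ∃ s' : {j : Fin n → ℤ // dualLe n σ j m ∧ y ∈ mf.E σ j}, dualLt n σ s'.1 s.1 := by
      rintro ⟨j, hj1, hj2⟩
      obtain ⟨j', hj', hyj'⟩ := hcon j hj1 hj2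
      exact ⟨⟨j', dualLe_trans hj'.1 hj1, hyj'⟩, hj'⟩
    obtain ⟨f, hf⟩ := Classical.axiomOfChoice hstep
    set s0 : {j : Fin n → ℤ // dualLe n σ j m ∧ y ∈ mf.E σ j} := ⟨m, dualLe_refl σ m, hy⟩
    set seq : ℕ → {j : Fin n → ℤ // dualLe n σ j m ∧ y ∈ mf.E σ j} := fun t => f^[t] s0
    have hseq : ∀ t, dualLt n σ (seq (t+1)).1 (seq t).1 := by
      intro t
      have : seq (t+1) = f (seq t) := Function.iterate_succ_apply' f t s0
      rw [this]
      exact hf (seq t)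
    obtain ⟨i0, hi0⟩ := Finset.nonempty_of_ne_empty hσ
    set ms : ℤ → Fin n → ℤ := fun i => if i ≤ 0 then (seq (-i).toNat).1 else m + i • Dsum σ
    have hchain : ∀ i : ℤ, dualLt n σ (ms (i - 1)) (ms i) := by
      intro i
      by_cases hi : i ≤ 0
      · have h1 : ms i = (seq (-i).toNat).1 := if_pos hi
        have h2 : ms (i-1) = (seq ((-i).toNat + 1)).1 := by
          have : (-(i-1)).toNat = (-i).toNat + 1 := by omega
          rw [show ms (i-1) = (seq (-(i-1)).toNat).1 from if_pos (by omega), this]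
        rw [h1, h2]
        exact hseq _
      · have h1 : ms i = m + i • Dsum σ := if_neg hi
        have h2 : ms (i - 1) = (if i = 1 then m else m + (i-1) • Dsum σ) := by
          by_cases hone : i = 1
          · subst hone
            simp only [ms, if_pos (by norm_num : (1:ℤ) - 1 ≤ 0)]
            norm_num [seq]
            rfl
          · rw [if_neg hone, show ms (i-1) = m + (i-1) • Dsum σ from if_neg (by omega)]
        rw [h1, h2]
        have hgen : ∀ a b : ℤ, a < b → dualLt n σ (m + a • Dsum σ) (m + b • Dsum σ) := by
          intro a b hab
          constructor
          · intro j hj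
            rw [pair_sub, pair_add, pair_add, pair_smul, pair_smul, pair_Dsum σ hj]
            omega
          · intro hperp
            have := hperp i0 hi0
            rw [pair_sub, pair_add, pair_add, pair_smul, pair_smul, pair_Dsum σ hi0] at this
            omega
        by_cases hone : i = 1
        · rw [if_pos hone]
          have := hgen 0 i (by omega)
          simpa using this
        · rw [if_neg hone]
          exact hgen (i-1) i (by omega)
    obtain ⟨i₀, hbot⟩ := mf.chain_bot σ ms hchain
    have hle : min i₀ 0 ≤ i₀ := min_le_left _ _
    have h0 : min i₀ 0 ≤ 0 := min_le_right _ _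
    have hmem : y ∈ mf.E σ (ms (min i₀ 0)) := by
      rw [show ms (min i₀ 0) = (seq (-(min i₀ 0)).toNat).1 from if_pos h0]
      exact (seq _).2.2
    rw [hbot _ hle] at hmem
    exact hy0 (Submodule.mem_bot ℂ |>.1 hmem)

-- support finset of a family
noncomputable def suppF (mf : MultiFilt n V) : Finset (Cone n × (Fin n → ℤ)) :=
  mf.finite_support.choose

lemma suppF_spec (mf : MultiFilt n V) : ∀ (σ : Cone n) (m : Fin n → ℤ),
    ¬ (mf.E σ m : Set V) ⊆ (⋃ m' ∈ {m' | dualLt n σ m' m}, (mf.E σ m' : Set V)) →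
    ∃ q ∈ suppF mf, q.1 = σ ∧ inPerp n σ (m - q.2) :=
  mf.finite_support.choose_spec

lemma descend_support (mf : MultiFilt n V) (σ : Cone n) (m : Fin n → ℤ) (y : V)
    (hy : y ∈ mf.E σ m) (hy0 : y ≠ 0) :
    ∃ j, dualLe n σ j m ∧ y ∈ mf.E σ j ∧ (∀ j', dualLt n σ j' j → y ∉ mf.E σ j') ∧
      ∃ q ∈ suppF mf, q.1 = σ ∧ inPerp n σ (j - q.2) := by
  obtain ⟨j, hj1, hj2, hj3⟩ := descend_min mf σ m y hy hy0
  refine ⟨j, hj1, hj2, hj3, ?_⟩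
  apply suppF_spec mf σ j
  intro hsub
  have := hsub hj2
  simp only [Set.mem_iUnion, Set.mem_setOf_eq, SetLike.mem_coe] at this
  obtain ⟨j', hj', hmem⟩ := this
  exact hj3 j' hj' hmem

-- generic descent for a plain function with the chain property
lemma descend_min_fun (Efun : Cone n → (Fin n → ℤ) → Submodule ℂ V)
    (hcb : ∀ (σ : Cone n) (ms : ℤ → Fin n → ℤ),
      (∀ i : ℤ, dualLt n σ (ms (i - 1)) (ms i)) → ∃ i₀ : ℤ, ∀ i ≤ i₀, Efun σ (ms i) = ⊥)
    (σ : Cone n) (m : Fin n → ℤ) (y : V)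
    (hy : y ∈ Efun σ m) (hy0 : y ≠ 0) :
    ∃ j, dualLe n σ j m ∧ y ∈ Efun σ j ∧ ∀ j', dualLt n σ j' j → y ∉ Efun σ j' := by
  classical
  by_cases hσ : σ.1 = ∅
  · refine ⟨m, dualLe_refl σ m, hy, fun j' hj' _ => ?_⟩
    exact hj'.2 (fun i hi => absurd (hσ ▸ hi) (Finset.notMem_empty i))
  · by_contra hcon
    push_neg at hcon
    have hstep : ∀ s : {j : Fin n → ℤ // dualLe n σ j m ∧ y ∈ Efun σ j},
        ∃ s' : {j : Fin n → ℤ // dualLe n σ j m ∧ y ∈ Efun σ j}, dualLt n σ s'.1 s.1 := by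
      rintro ⟨j, hj1, hj2⟩
      obtain ⟨j', hj', hyj'⟩ := hcon j hj1 hj2
      exact ⟨⟨j', dualLe_trans hj'.1 hj1, hyj'⟩, hj'⟩
    obtain ⟨f, hf⟩ := Classical.axiomOfChoice hstep
    set s0 : {j : Fin n → ℤ // dualLe n σ j m ∧ y ∈ Efun σ j} := ⟨m, dualLe_refl σ m, hy⟩
    set seq : ℕ → {j : Fin n → ℤ // dualLe n σ j m ∧ y ∈ Efun σ j} := fun t => f^[t] s0
    have hseq : ∀ t, dualLt n σ (seq (t+1)).1 (seq t).1 := by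
      intro t
      have : seq (t+1) = f (seq t) := Function.iterate_succ_apply' f t s0
      rw [this]
      exact hf (seq t)
    obtain ⟨i0, hi0⟩ := Finset.nonempty_of_ne_empty hσ
    set ms : ℤ → Fin n → ℤ := fun i => if i ≤ 0 then (seq (-i).toNat).1 else m + i • Dsum σ
    have hchain : ∀ i : ℤ, dualLt n σ (ms (i - 1)) (ms i) := by
      intro i
      by_cases hi : i ≤ 0
      · have h1 : ms i = (seq (-i).toNat).1 := if_pos hi
        have h2 : ms (i-1) = (seq ((-i).toNat + 1)).1 := by
          have : (-(i-1)).toNat = (-i).toNat + 1 := by omega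
          rw [show ms (i-1) = (seq (-(i-1)).toNat).1 from if_pos (by omega), this]
        rw [h1, h2]
        exact hseq _
      · have h1 : ms i = m + i • Dsum σ := if_neg hi
        have h2 : ms (i - 1) = (if i = 1 then m else m + (i-1) • Dsum σ) := by
          by_cases hone : i = 1
          · subst hone
            simp only [ms, if_pos (by norm_num : (1:ℤ) - 1 ≤ 0)]
            norm_num [seq]
            rfl
          · rw [if_neg hone, show ms (i-1) = m + (i-1) • Dsum σ from if_neg (by omega)]
        rw [h1, h2]
        have hgen : ∀ a b : ℤ, a < b → dualLt n σ (m + a • Dsum σ) (m + b • Dsum σ) := by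
          intro a b hab
          constructor
          · intro j hj
            rw [pair_sub, pair_add, pair_add, pair_smul, pair_smul, pair_Dsum σ hj]
            omega
          · intro hperp
            have := hperp i0 hi0
            rw [pair_sub, pair_add, pair_add, pair_smul, pair_smul, pair_Dsum σ hi0] at this
            omega
        by_cases hone : i = 1
        · rw [if_pos hone]
          have := hgen 0 i (by omega)
          simpa using this
        · rw [if_neg hone]
          exact hgen (i-1) i (by omega)
    obtain ⟨i₀, hbot⟩ := hcb σ ms hchain
    have hle : min i₀ 0 ≤ i₀ := min_le_left _ _
    have h0 : min i₀ 0 ≤ 0 := min_le_right _ _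
    have hmem : y ∈ Efun σ (ms (min i₀ 0)) := by
      rw [show ms (min i₀ 0) = (seq (-(min i₀ 0)).toNat).1 from if_pos h0]
      exact (seq _).2.2
    rw [hbot _ hle] at hmem
    exact hy0 (Submodule.mem_bot ℂ |>.1 hmem)

-- submodule helpers
lemma sup_span_inf {U W : Submodule ℂ V} {x : V} (hUW : U ≤ W) (hx : x ∉ W) :
    (U ⊔ ℂ ∙ x) ⊓ W = U := by
  apply le_antisymm
  · rintro y ⟨hy1, hy2⟩
    obtain ⟨u, hu, z, hz, rfl⟩ := Submodule.mem_sup.1 hy1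
    obtain ⟨c, rfl⟩ := Submodule.mem_span_singleton.1 hz
    have hcx : c • x ∈ W := by
      have : c • x = u + c • x - u := by abel
      rw [this]
      exact Submodule.sub_mem W hy2 (hUW hu)
    rcases eq_or_ne c 0 with rfl | hc
    · simpa using hu
    · exact absurd (by simpa [smul_smul, inv_mul_cancel₀ hc] using Submodule.smul_mem W c⁻¹ hcx) hx
  · exact le_inf le_sup_left hUW

lemma finrank_sup_span [FiniteDimensional ℂ V] {U : Submodule ℂ V} {x : V} (hx : x ∉ U) :
    Module.finrank ℂ (U ⊔ ℂ ∙ x : Submodule ℂ V) = Module.finrank ℂ U + 1 := by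
  have hx0 : x ≠ 0 := fun h => hx (h ▸ U.zero_mem)
  have hinf : U ⊓ (ℂ ∙ x) = ⊥ := by
    rw [Submodule.eq_bot_iff]
    rintro y ⟨hy1, hy2⟩
    obtain ⟨c, rfl⟩ := Submodule.mem_span_singleton.1 hy2
    rcases eq_or_ne c 0 with rfl | hc
    · simp
    · exact absurd (by simpa [smul_smul, inv_mul_cancel₀ hc] using Submodule.smul_mem U c⁻¹ hy1) hx
  have := Submodule.finrank_sup_add_finrank_inf_eq U (ℂ ∙ x)
  rw [hinf, finrank_span_singleton hx0] at this
  simpa using this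

-- ### the elementary move
variable [FiniteDimensional ℂ V]

open scoped Classical in
noncomputable def moveFun (E F : MultiFilt n V) (σ₀ : Cone n) (m₀ : Fin n → ℤ) (x : V) :
    Cone n → (Fin n → ℤ) → Submodule ℂ V := fun σ m =>
  if σ = σ₀ then (if inPerp n σ₀ (m - m₀) then E.E σ₀ m ⊔ (ℂ ∙ x) else E.E σ m)
  else if σ₀.1 ⊆ σ.1 ∧ dualLe n σ₀ m m₀ then
    F.E σ m ⊓ ⨅ i : {j // j ∈ σ.1}, moveFun E F σ₀ m₀ x (face σ i.1) m
  else E.E σ m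
termination_by σ => σ.1.card
decreasing_by
  simp only [face]
  exact Finset.card_erase_lt_of_mem i.2

variable (E F : MultiFilt n V) (σ₀ : Cone n) (m₀ : Fin n → ℤ) (x : V)

lemma mv_coset {m : Fin n → ℤ} (h : inPerp n σ₀ (m - m₀)) :
    moveFun E F σ₀ m₀ x σ₀ m = E.E σ₀ m ⊔ (ℂ ∙ x) := by
  rw [moveFun, if_pos rfl, if_pos h]

lemma mv_self_off {m : Fin n → ℤ} (h : ¬ inPerp n σ₀ (m - m₀)) :
    moveFun E F σ₀ m₀ x σ₀ m = E.E σ₀ m := by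
  rw [moveFun, if_pos rfl, if_neg h]

lemma mv_gate {σ : Cone n} (hσ : σ ≠ σ₀) {m : Fin n → ℤ} (h1 : σ₀.1 ⊆ σ.1)
    (h2 : dualLe n σ₀ m m₀) :
    moveFun E F σ₀ m₀ x σ m
      = F.E σ m ⊓ ⨅ i : {j // j ∈ σ.1}, moveFun E F σ₀ m₀ x (face σ i.1) m := by
  rw [moveFun, if_neg hσ, if_pos ⟨h1, h2⟩]

lemma mv_off {σ : Cone n} (hσ : σ ≠ σ₀) {m : Fin n → ℤ}
    (h : ¬(σ₀.1 ⊆ σ.1 ∧ dualLe n σ₀ m m₀)) :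
    moveFun E F σ₀ m₀ x σ m = E.E σ m := by
  rw [moveFun, if_neg hσ, if_neg h]

def Dominated (E F : MultiFilt n V) (k : ℕ) : Prop :=
  ∀ σ : Cone n, k < σ.1.card → ∀ m,
    E.E σ m = F.E σ m ⊓ ⨅ i : {j // j ∈ σ.1}, E.E (face σ i.1) m

section MoveLemmas

variable (hEF : ∀ σ m, E.E σ m ≤ F.E σ m)
variable (hdom : Dominated E F σ₀.1.card)
variable (hx1 : x ∈ F.E σ₀ m₀) (hx2 : x ∉ E.E σ₀ m₀)
variable (hB : ∀ i ∈ σ₀.1, x ∈ E.E σ₀ (m₀ + dvec n σ₀ i))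

lemma cone_ssubset_card {σ : Cone n} (h1 : σ₀.1 ⊆ σ.1) (h2 : σ ≠ σ₀) :
    σ₀.1.card < σ.1.card :=
  Finset.card_lt_card (Finset.ssubset_iff_subset_ne.2 ⟨h1, fun h => h2 (Subtype.ext h.symm)⟩)

include hx2 in
lemma x_notmem_coset {m : Fin n → ℤ} (h : inPerp n σ₀ (m - m₀)) : x ∉ E.E σ₀ m := by
  have heq : E.E σ₀ m = E.E σ₀ m₀ := mf_congr E σ₀ (show inPerp n σ₀ (m₀ - m) by
    intro i hi; have := h i hi; rw [pair_sub] at *; omega)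
  rw [heq]
  exact hx2

include hx1 in
lemma x_mem_F_coset {m : Fin n → ℤ} (h : inPerp n σ₀ (m - m₀)) : x ∈ F.E σ₀ m := by
  rw [mf_congr F σ₀ h] at hx1
  exact hx1

include hB in
lemma x_mem_above {m' : Fin n → ℤ} (h1 : dualLe n σ₀ m₀ m') (h2 : ¬ inPerp n σ₀ (m' - m₀)) :
    x ∈ E.E σ₀ m' := by
  have : ∃ i ∈ σ₀.1, 0 < pair n (m' - m₀) i := by
    by_contra hcon
    push_neg at hcon
    exact h2 (fun i hi => le_antisymm (hcon i hi) (h1 i hi))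
  obtain ⟨i, hi, hlt⟩ := this
  refine E.mono σ₀ (m₀ + dvec n σ₀ i) m' ?_ (hB i hi)
  intro j hj
  rw [pair_sub, pair_add]
  rcases eq_or_ne j i with rfl | hne
  · rw [dvec_self n σ₀ j hi]
    rw [pair_sub] at hlt
    omega
  · rw [dvec_other n σ₀ i hi hj hne]
    have := h1 j hj
    rw [pair_sub] at this
    omega

include hB in
lemma x_mem_face_coset {i : Fin (n+1)} (hi : i ∈ σ₀.1) {m : Fin n → ℤ}
    (h : ∀ j ∈ σ₀.1, j ≠ i → pair n m j = pair n m₀ j) : x ∈ E.E (face σ₀ i) m := by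
  have h1 : x ∈ E.E (face σ₀ i) (m₀ + dvec n σ₀ i) :=
    mf_face_le_one E σ₀ hi (m₀ + dvec n σ₀ i) (hB i hi)
  rwa [mf_congr E (face σ₀ i) (show inPerp n (face σ₀ i) (m - (m₀ + dvec n σ₀ i)) by
    intro j hj
    simp only [face, Finset.mem_erase] at hj
    rw [pair_sub, pair_add, dvec_other n σ₀ i hi hj.2 hj.1, h j hj.2 hj.1]
    ring)] at h1

include hEF hx1 in
lemma mv_le_F : ∀ σ m, moveFun E F σ₀ m₀ x σ m ≤ F.E σ m := by
  intro σ m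
  rcases eq_or_ne σ σ₀ with heq | hne
  · rw [heq]
    by_cases h : inPerp n σ₀ (m - m₀)
    · rw [mv_coset E F σ₀ m₀ x h]
      refine sup_le (hEF _ _) ?_
      rw [Submodule.span_singleton_le_iff_mem]
      exact x_mem_F_coset F σ₀ m₀ x hx1 h
    · rw [mv_self_off E F σ₀ m₀ x h]; exact hEF _ _
  · by_cases h : σ₀.1 ⊆ σ.1 ∧ dualLe n σ₀ m m₀
    · rw [mv_gate E F σ₀ m₀ x hne h.1 h.2]; exact inf_le_left
    · rw [mv_off E F σ₀ m₀ x hne h]; exact hEF _ _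

include hEF in
lemma mv_ge_E : ∀ σ m, E.E σ m ≤ moveFun E F σ₀ m₀ x σ m := by
  suffices h : ∀ c (σ : Cone n), σ.1.card = c → ∀ m, E.E σ m ≤ moveFun E F σ₀ m₀ x σ m by
    intro σ m; exact h σ.1.card σ rfl m
  intro c
  induction c using Nat.strong_induction_on with
  | _ c IH =>
    intro σ hc m
    rcases eq_or_ne σ σ₀ with heq | hne
    · rw [heq]
      by_cases h : inPerp n σ₀ (m - m₀)
      · rw [mv_coset E F σ₀ m₀ x h]; exact le_sup_left
      · exact (mv_self_off E F σ₀ m₀ x h).ge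
    · by_cases h : σ₀.1 ⊆ σ.1 ∧ dualLe n σ₀ m m₀
      · rw [mv_gate E F σ₀ m₀ x hne h.1 h.2]
        refine le_inf (hEF _ _) (le_iInf fun i => ?_)
        refine le_trans (mf_face_le_one E σ i.2 m) ?_
        have hcd : (face σ i.1).1.card < c := by
          rw [← hc]; exact Finset.card_erase_lt_of_mem i.2
        exact IH (face σ i.1).1.card hcd (face σ i.1) rfl m
      · exact (mv_off E F σ₀ m₀ x hne h).ge

include hEF hdom hx1 hx2 hB in
lemma mv_mono : ∀ σ m m', dualLe n σ m m' →
    moveFun E F σ₀ m₀ x σ m ≤ moveFun E F σ₀ m₀ x σ m' := by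
  suffices h : ∀ c (σ : Cone n), σ.1.card = c → ∀ m m', dualLe n σ m m' →
      moveFun E F σ₀ m₀ x σ m ≤ moveFun E F σ₀ m₀ x σ m' by
    intro σ m m' hle; exact h σ.1.card σ rfl m m' hle
  intro c
  induction c using Nat.strong_induction_on with
  | _ c IH =>
    intro σ hc m m' hle
    rcases eq_or_ne σ σ₀ with heq | hne
    · rw [heq] at hle ⊢
      by_cases h : inPerp n σ₀ (m - m₀)
      · rw [mv_coset E F σ₀ m₀ x h]
        by_cases h' : inPerp n σ₀ (m' - m₀)
        · rw [mv_coset E F σ₀ m₀ x h']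
          exact sup_le_sup_right (E.mono _ _ _ hle) _
        · rw [mv_self_off E F σ₀ m₀ x h']
          refine sup_le (E.mono _ _ _ hle) ?_
          rw [Submodule.span_singleton_le_iff_mem]
          refine x_mem_above E σ₀ m₀ x hB ?_ h'
          exact dualLe_trans (dualLe_of_inPerp h) hle
      · rw [mv_self_off E F σ₀ m₀ x h]
        exact le_trans (E.mono _ _ _ hle) (mv_ge_E E F σ₀ m₀ x hEF σ₀ m')
    · by_cases h : σ₀.1 ⊆ σ.1 ∧ dualLe n σ₀ m m₀
      · by_cases h' : dualLe n σ₀ m' m₀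
        · rw [mv_gate E F σ₀ m₀ x hne h.1 h.2, mv_gate E F σ₀ m₀ x hne h.1 h']
          refine inf_le_inf (F.mono _ _ _ hle) ?_
          refine le_iInf fun i => le_trans (iInf_le _ i) ?_
          have hcd : (face σ i.1).1.card < c := by
            rw [← hc]; exact Finset.card_erase_lt_of_mem i.2
          exact IH (face σ i.1).1.card hcd (face σ i.1) rfl m m'
            (dualLe_mono_cone (Finset.erase_subset i.1 σ.1) hle)
        · -- the hard case: m in the gate, m' above it
          rw [mv_gate E F σ₀ m₀ x hne h.1 h.2,
            mv_off E F σ₀ m₀ x hne (fun hcon => h' hcon.2)]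
          intro y hy
          have hyF : y ∈ F.E σ m' := F.mono σ m m' hle (Submodule.mem_inf.1 hy).1
          have hyfaces : ∀ i : {j // j ∈ σ.1}, y ∈ E.E (face σ i.1) m' := by
            intro i
            have h1 : y ∈ moveFun E F σ₀ m₀ x (face σ i.1) m :=
              (Submodule.mem_iInf _).1 (Submodule.mem_inf.1 hy).2 i
            have hcd : (face σ i.1).1.card < c := by
              rw [← hc]; exact Finset.card_erase_lt_of_mem i.2
            have h2 : y ∈ moveFun E F σ₀ m₀ x (face σ i.1) m' :=
              IH (face σ i.1).1.card hcd (face σ i.1) rfl m m'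
                (dualLe_mono_cone (Finset.erase_subset i.1 σ.1) hle) h1
            rcases eq_or_ne (face σ i.1) σ₀ with hfe | hfne
            · rw [hfe] at h2 ⊢
              rwa [mv_self_off E F σ₀ m₀ x (fun hcon => h' (dualLe_of_inPerp' hcon))] at h2
            · rwa [mv_off E F σ₀ m₀ x hfne (fun hcon => h' hcon.2)] at h2
          have hcard : σ₀.1.card < σ.1.card := cone_ssubset_card σ₀ h.1 hne
          rw [hdom σ hcard m']
          exact ⟨hyF, Submodule.mem_iInf _ |>.2 fun i => hyfaces i⟩
      · rw [mv_off E F σ₀ m₀ x hne h]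
        exact le_trans (E.mono _ _ _ hle) (mv_ge_E E F σ₀ m₀ x hEF σ m')

end MoveLemmas

lemma chain_stab (f : ℕ → Submodule ℂ V) (hf : Monotone f) :
    ∃ K, (∀ k, K ≤ k → f k = ⨆ j, f j) := by
  obtain ⟨K, h1, h2⟩ := sup_stab f hf
  exact ⟨K, fun k hk => by rw [h2]; exact le_antisymm (h1 k) (hf hk)⟩

lemma mem_chain_attained {f : ℕ → Submodule ℂ V} (hf : Monotone f) {y : V}
    (hy : y ∈ ⨆ j, f j) : ∃ K, ∀ k, K ≤ k → y ∈ f k := by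
  obtain ⟨K, hK⟩ := chain_stab f hf
  exact ⟨K, fun k hk => (hK k hk).symm ▸ hy⟩

section MoveFacet

variable (hEF : ∀ σ m, E.E σ m ≤ F.E σ m)
variable (hdom : Dominated E F σ₀.1.card)
variable (hx1 : x ∈ F.E σ₀ m₀) (hx2 : x ∉ E.E σ₀ m₀)
variable (hB : ∀ i ∈ σ₀.1, x ∈ E.E σ₀ (m₀ + dvec n σ₀ i))

include hEF hdom hx1 hx2 hB

lemma mv_congr' {σ : Cone n} {m m' : Fin n → ℤ} (h : inPerp n σ (m' - m)) :
    moveFun E F σ₀ m₀ x σ m = moveFun E F σ₀ m₀ x σ m' :=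
  le_antisymm (mv_mono E F σ₀ m₀ x hEF hdom hx1 hx2 hB σ m m' (dualLe_of_inPerp h))
    (mv_mono E F σ₀ m₀ x hEF hdom hx1 hx2 hB σ m' m (dualLe_of_inPerp' h))

lemma mv_chain_mono (σbig ρ : Cone n) (hsub : ρ.1 ⊆ σbig.1) {i : Fin (n+1)}
    (hiσ : i ∈ σbig.1) (m : Fin n → ℤ) :
    Monotone (fun k : ℕ => moveFun E F σ₀ m₀ x ρ (m + (k : ℤ) • dvec n σbig i)) := by
  intro a b hab
  exact mv_mono E F σ₀ m₀ x hEF hdom hx1 hx2 hB ρ _ _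
    (dualLe_chain_d σbig ρ hsub hiσ m (by exact_mod_cast hab))

lemma mv_facet_gen :
    ∀ (c : ℕ) (ρ : Cone n), ρ.1.card = c → ∀ (σbig : Cone n), ρ.1 ⊆ σbig.1 →
    ∀ i : Fin (n+1), i ∈ σbig.1 → i ∈ ρ.1 → ∀ m,
    moveFun E F σ₀ m₀ x (face ρ i) m
      = ⨆ k : ℕ, moveFun E F σ₀ m₀ x ρ (m + (k : ℤ) • dvec n σbig i) := by
  intro c
  induction c using Nat.strong_induction_on with
  | _ c IH =>
    intro ρ hc σbig hsub i hiσ hiρ m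
    set d : Fin n → ℤ := dvec n σbig i with hd
    have hd0 : ∀ j ∈ ρ.1, j ≠ i → pair n d j = 0 := fun j hj hji =>
      dvec_other n σbig i hiσ (hsub hj) hji
    have hdτ : ∀ (k : ℤ) (m' : Fin n → ℤ), inPerp n (face ρ i) (m' - (m' + k • d)) := by
      intro k m' j hj
      simp only [face, Finset.mem_erase] at hj
      rw [pair_sub, pair_add, pair_smul, hd0 j hj.2 hj.1]
      ring
    have hEfacet : E.E (face ρ i) m = ⨆ k : ℕ, E.E ρ (m + (k : ℤ) • d) :=
      mf_facet' E σbig ρ hsub hiσ hiρ m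
    by_cases hB0 : σ₀.1 ⊆ ρ.1
    case neg =>
      -- case A : everything is E
      have hρ : ρ ≠ σ₀ := fun h => hB0 (h ▸ Finset.Subset.refl _)
      have hτ : (face ρ i) ≠ σ₀ := fun h => hB0 (by
        rw [← h]; exact Finset.erase_subset i ρ.1)
      have hτ' : ¬ (σ₀.1 ⊆ (face ρ i).1 ∧ dualLe n σ₀ m m₀) := fun hcon =>
        hB0 (hcon.1.trans (Finset.erase_subset i ρ.1))
      rw [mv_off E F σ₀ m₀ x hτ hτ', hEfacet]
      refine iSup_congr fun k => ?_
      rw [mv_off E F σ₀ m₀ x hρ (fun hcon => hB0 hcon.1)]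
    case pos =>
    by_cases hB1 : i ∈ σ₀.1
    case pos =>
      -- case B1 : i ∈ σ₀, the face is not above σ₀
      have hτne : (face ρ i) ≠ σ₀ := by
        intro h
        have : i ∈ (face ρ i).1 := h ▸ hB1
        simp [face] at this
      have hτ' : ¬ (σ₀.1 ⊆ (face ρ i).1 ∧ dualLe n σ₀ m m₀) := by
        rintro ⟨hcon, -⟩
        have : i ∈ (face ρ i).1 := hcon hB1
        simp [face] at this
      rw [mv_off E F σ₀ m₀ x hτne hτ']
      apply le_antisymm
      · -- E τ m ≤ sup
        rw [hEfacet]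
        exact iSup_mono fun k => mv_ge_E E F σ₀ m₀ x hEF ρ _
      · refine iSup_le fun k => ?_
        have hEbound : E.E ρ (m + (k:ℤ) • d) ≤ E.E (face ρ i) m := by
          refine le_trans (mf_face_le_one E ρ hiρ _) ?_
          exact le_of_eq (mf_congr E (face ρ i) (hdτ k m))
        rcases eq_or_ne ρ σ₀ with heq | hρne
        · rw [heq] at hEbound ⊢
          by_cases hco : inPerp n σ₀ ((m + (k:ℤ) • d) - m₀)
          · rw [mv_coset E F σ₀ m₀ x hco]
            refine sup_le hEbound ?_
            rw [Submodule.span_singleton_le_iff_mem]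
            rw [heq] at hd0
            refine x_mem_face_coset E σ₀ m₀ x hB hB1 ?_
            intro j hj hji
            have h1 := hco j hj
            rw [pair_sub, pair_add, pair_smul, hd0 j hj hji] at h1
            omega
          · rw [mv_self_off E F σ₀ m₀ x hco]
            exact hEbound
        · by_cases hg : dualLe n σ₀ (m + (k:ℤ) • d) m₀
          · rw [mv_gate E F σ₀ m₀ x hρne hB0 hg]
            refine le_trans inf_le_right (le_trans (iInf_le _ ⟨i, hiρ⟩) ?_)
            rw [mv_off E F σ₀ m₀ x hτne (fun hcon => by
              have : i ∈ (face ρ i).1 := hcon.1 hB1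
              simp [face] at this)]
            exact le_of_eq (mf_congr E (face ρ i) (hdτ k m))
          · rw [mv_off E F σ₀ m₀ x hρne (fun hcon => hg hcon.2)]
            exact hEbound
    case neg =>
      -- case B2 : i ∉ σ₀, so σ₀ ⊆ face ρ i
      have hτsub : σ₀.1 ⊆ (face ρ i).1 := fun j hj =>
        Finset.mem_erase.2 ⟨fun h => hB1 (h ▸ hj), hB0 hj⟩
      have hρne : ρ ≠ σ₀ := fun h => hB1 (h ▸ hiρ)
      have hdσ₀ : ∀ j ∈ σ₀.1, pair n d j = 0 := fun j hj =>
        hd0 j (hB0 hj) (fun h => hB1 (h ▸ hj))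
      have hpair : ∀ (k : ℤ) (j : Fin (n+1)), j ∈ σ₀.1 →
          pair n ((m + k • d) - m₀) j = pair n (m - m₀) j := by
        intro k j hj
        rw [pair_sub, pair_sub, pair_add, pair_smul, hdσ₀ j hj]
        ring
      have hgiff : ∀ k : ℤ, dualLe n σ₀ (m + k • d) m₀ ↔ dualLe n σ₀ m m₀ := by
        intro k
        constructor <;> intro hh j hj <;> have h1 := hh j hj <;> have h2 := hpair k j hj
        · rw [show pair n (m₀ - (m + k • d)) j
            = - pair n ((m + k • d) - m₀) j by rw [pair_sub, pair_sub]; ring, h2,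
            show pair n (m - m₀) j = - pair n (m₀ - m) j by rw [pair_sub, pair_sub]; ring]
            at h1
          omega
        · rw [show pair n (m₀ - (m + k • d)) j
            = - pair n ((m + k • d) - m₀) j by rw [pair_sub, pair_sub]; ring, h2,
            show pair n (m - m₀) j = - pair n (m₀ - m) j by rw [pair_sub, pair_sub]; ring]
          omega
      have hpiff : ∀ k : ℤ, inPerp n σ₀ ((m + k • d) - m₀) ↔ inPerp n σ₀ (m - m₀) := by
        intro k
        constructor <;> intro hh j hj <;> have h1 := hh j hj <;> have h2 := hpair k j hj
        · rw [← h2]; exact h1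
        · rw [h2]; exact h1
      have hEcongr : ∀ k : ℤ, E.E σ₀ (m + k • d) = E.E σ₀ m := by
        intro k
        refine mf_congr E σ₀ ?_
        intro j hj
        rw [pair_sub, pair_add, pair_smul, hdσ₀ j hj]
        ring
      by_cases hga : dualLe n σ₀ m m₀
      case neg =>
        -- B2a : gates all off
        have hL : moveFun E F σ₀ m₀ x (face ρ i) m = E.E (face ρ i) m := by
          rcases eq_or_ne (face ρ i) σ₀ with h | h
          · rw [h]
            exact mv_self_off E F σ₀ m₀ x (fun hco => hga (dualLe_of_inPerp' hco))
          · exact mv_off E F σ₀ m₀ x h (fun hcon => hga hcon.2)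
        rw [hL, hEfacet]
        refine iSup_congr fun k => ?_
        rw [mv_off E F σ₀ m₀ x hρne (fun hcon => hga ((hgiff k).1 hcon.2))]
      case pos =>
      by_cases hτeq : face ρ i = σ₀
      · -- B2b : the face is σ₀ itself
        have hρeq : ρ.1 = insert i σ₀.1 := by
          rw [← Finset.insert_erase hiρ]
          congr 1
          exact congrArg Subtype.val hτeq
        have hmem_σ₀ : ∀ l : {j // j ∈ ρ.1}, l.1 ≠ i → l.1 ∈ σ₀.1 := by
          intro l hl
          have h2 : (l : Fin (n+1)) ∈ insert i σ₀.1 := by rw [← hρeq]; exact l.2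
          rcases Finset.mem_insert.1 h2 with h3 | h3
          · exact absurd h3 hl
          · exact h3
        by_cases hco : inPerp n σ₀ (m - m₀)
        · -- B2b(i) : on the coset
          rw [hτeq, mv_coset E F σ₀ m₀ x hco]
          apply le_antisymm
          · refine sup_le ?_ ?_
            · have h1 : E.E σ₀ m = E.E (face ρ i) m := by rw [hτeq]
              rw [h1, hEfacet]
              exact iSup_mono fun k => mv_ge_E E F σ₀ m₀ x hEF ρ _
            · rw [Submodule.span_singleton_le_iff_mem]
              have hxF : x ∈ F.E (face ρ i) m := by
                rw [hτeq]; exact x_mem_F_coset F σ₀ m₀ x hx1 hco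
              have hFmono : Monotone (fun k : ℕ => F.E ρ (m + (k:ℤ) • d)) :=
                fun a b hab => F.mono _ _ _
                  (dualLe_chain_d σbig ρ hsub hiσ m (by exact_mod_cast hab))
              have hFfacet : F.E (face ρ i) m = ⨆ k : ℕ, F.E ρ (m + (k:ℤ) • d) :=
                mf_facet' F σbig ρ hsub hiσ hiρ m
              obtain ⟨KF, hKF⟩ := mem_chain_attained hFmono (hFfacet ▸ hxF)
              have hfaces : ∀ l : {j // j ∈ ρ.1}, ∃ K : ℕ, ∀ k : ℕ, K ≤ k →
                  x ∈ moveFun E F σ₀ m₀ x (face ρ l.1) (m + (k:ℤ) • d) := by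
                intro l
                rcases eq_or_ne l.1 i with hli | hli
                · refine ⟨0, fun k _ => ?_⟩
                  have hfl : face ρ l.1 = σ₀ := by rw [hli, hτeq]
                  rw [hfl, mv_coset E F σ₀ m₀ x ((hpiff k).2 hco)]
                  exact Submodule.mem_sup_right (Submodule.mem_span_singleton_self x)
                · have hlσ₀ : l.1 ∈ σ₀.1 := hmem_σ₀ l hli
                  have hfl_ne : face ρ l.1 ≠ σ₀ := by
                    intro h
                    have : l.1 ∈ (face ρ l.1).1 := h ▸ hlσ₀
                    simp [face] at this
                  have hfl_nsub : ¬ σ₀.1 ⊆ (face ρ l.1).1 := by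
                    intro h
                    have : l.1 ∈ (face ρ l.1).1 := h hlσ₀
                    simp [face] at this
                  have hifl : i ∈ (face ρ l.1).1 :=
                    Finset.mem_erase.2 ⟨fun h => hli (h.symm ▸ rfl), hiρ⟩
                  have h1 : x ∈ E.E (face σ₀ l.1) m := by
                    refine x_mem_face_coset E σ₀ m₀ x hB hlσ₀ ?_
                    intro j hj hjl
                    have := hco j hj
                    rw [pair_sub] at this
                    omega
                  have hff : face (face ρ l.1) i = face σ₀ l.1 := by
                    rw [face_face, hτeq]
                  have hEf2 : E.E (face σ₀ l.1) m
                      = ⨆ k : ℕ, E.E (face ρ l.1) (m + (k:ℤ) • d) := by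
                    rw [← hff]
                    exact mf_facet' E σbig (face ρ l.1)
                      ((Finset.erase_subset l.1 ρ.1).trans hsub) hiσ hifl m
                  have hEmono : Monotone (fun k : ℕ => E.E (face ρ l.1) (m + (k:ℤ) • d)) :=
                    fun a b hab => E.mono _ _ _
                      (dualLe_chain_d σbig (face ρ l.1)
                        ((Finset.erase_subset l.1 ρ.1).trans hsub) hiσ m (by exact_mod_cast hab))
                  obtain ⟨K, hK⟩ := mem_chain_attained hEmono (hEf2 ▸ h1)
                  refine ⟨K, fun k hk => ?_⟩
                  rw [mv_off E F σ₀ m₀ x hfl_ne (fun hcon => hfl_nsub hcon.1)]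
                  exact hK k hk
              choose Kf hKf using hfaces
              set Kb : ℕ := max KF (Finset.univ.sup Kf) with hKb
              refine Submodule.mem_iSup_of_mem Kb ?_
              rw [mv_gate E F σ₀ m₀ x hρne hB0 ((hgiff Kb).2 hga)]
              refine Submodule.mem_inf.2 ⟨hKF Kb (le_max_left _ _), ?_⟩
              refine (Submodule.mem_iInf _).2 fun l => ?_
              exact hKf l Kb (le_trans (Finset.le_sup (Finset.mem_univ l)) (le_max_right _ _))
          · refine iSup_le fun k => ?_
            rw [mv_gate E F σ₀ m₀ x hρne hB0 ((hgiff k).2 hga)]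
            refine le_trans inf_le_right (le_trans (iInf_le _ ⟨i, hiρ⟩) ?_)
            rw [hτeq, mv_coset E F σ₀ m₀ x ((hpiff k).2 hco)]
            exact sup_le_sup_right (le_of_eq (hEcongr k)) _
        · -- B2b(ii) : below the coset
          rw [hτeq, mv_self_off E F σ₀ m₀ x hco]
          apply le_antisymm
          · have h1 : E.E σ₀ m = E.E (face ρ i) m := by rw [hτeq]
            rw [h1, hEfacet]
            exact iSup_mono fun k => mv_ge_E E F σ₀ m₀ x hEF ρ _
          · refine iSup_le fun k => ?_
            rw [mv_gate E F σ₀ m₀ x hρne hB0 ((hgiff k).2 hga)]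
            refine le_trans inf_le_right (le_trans (iInf_le _ ⟨i, hiρ⟩) ?_)
            rw [hτeq, mv_self_off E F σ₀ m₀ x (fun hcon => hco ((hpiff k).1 hcon))]
            exact le_of_eq (hEcongr k)
      · -- B2c : both the cone and its face are strictly above σ₀
        have hIHl : ∀ l : {j // j ∈ ρ.1}, l.1 ≠ i →
            moveFun E F σ₀ m₀ x (face (face ρ i) l.1) m
              = ⨆ k : ℕ, moveFun E F σ₀ m₀ x (face ρ l.1) (m + (k:ℤ) • d) := by
          intro l hli
          have hifl : i ∈ (face ρ l.1).1 :=
            Finset.mem_erase.2 ⟨fun h => hli (h.symm ▸ rfl), hiρ⟩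
          have hcd : (face ρ l.1).1.card < c := by
            rw [← hc]; exact Finset.card_erase_lt_of_mem l.2
          have := IH (face ρ l.1).1.card hcd (face ρ l.1) rfl σbig
            ((Finset.erase_subset l.1 ρ.1).trans hsub) i hiσ hifl m
          rw [face_face] at this
          exact this
        apply le_antisymm
        · -- G' τ m ≤ sup, via stabilization
          have hFmono : Monotone (fun k : ℕ => F.E ρ (m + (k:ℤ) • d)) :=
            fun a b hab => F.mono _ _ _
              (dualLe_chain_d σbig ρ hsub hiσ m (by exact_mod_cast hab))
          have hFfacet : F.E (face ρ i) m = ⨆ k : ℕ, F.E ρ (m + (k:ℤ) • d) :=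
            mf_facet' F σbig ρ hsub hiσ hiρ m
          obtain ⟨KF, hKF⟩ := chain_stab _ hFmono
          have hlstab : ∀ l : {j // j ∈ ρ.1}, ∃ K : ℕ, ∀ k : ℕ, K ≤ k →
              moveFun E F σ₀ m₀ x (face ρ i) m
                ≤ moveFun E F σ₀ m₀ x (face ρ l.1) (m + (k:ℤ) • d) := by
            intro l
            rcases eq_or_ne l.1 i with hli | hli
            · refine ⟨0, fun k _ => ?_⟩
              rw [hli]
              exact mv_mono E F σ₀ m₀ x hEF hdom hx1 hx2 hB (face ρ i) m _
                (dualLe_of_inPerp' (hdτ k m))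
            · have hGmono : Monotone
                  (fun k : ℕ => moveFun E F σ₀ m₀ x (face ρ l.1) (m + (k:ℤ) • d)) :=
                mv_chain_mono E F σ₀ m₀ x hEF hdom hx1 hx2 hB σbig (face ρ l.1)
                  ((Finset.erase_subset l.1 ρ.1).trans hsub) hiσ m
              obtain ⟨K, hK⟩ := chain_stab _ hGmono
              refine ⟨K, fun k hk => ?_⟩
              rw [hK k hk, ← hIHl l hli]
              have hlτ : l.1 ∈ (face ρ i).1 := Finset.mem_erase.2 ⟨hli, l.2⟩
              rw [mv_gate E F σ₀ m₀ x hτeq hτsub hga]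
              exact le_trans inf_le_right (iInf_le _ (⟨l.1, hlτ⟩ : {j // j ∈ (face ρ i).1}))
          choose Kf hKf using hlstab
          set Kb : ℕ := max KF (Finset.univ.sup Kf) with hKb
          refine le_trans ?_ (le_iSup _ Kb)
          rw [mv_gate E F σ₀ m₀ x hρne hB0 ((hgiff Kb).2 hga)]
          refine le_inf ?_ ?_
          · refine le_trans (mv_le_F E F σ₀ m₀ x hEF hx1 (face ρ i) m) ?_
            rw [hKF Kb (le_max_left _ _), ← hFfacet]
          · refine le_iInf fun l => ?_
            exact hKf l Kb (le_trans (Finset.le_sup (Finset.mem_univ l)) (le_max_right _ _))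
        · -- sup ≤ G' τ m
          refine iSup_le fun k => ?_
          rw [mv_gate E F σ₀ m₀ x hρne hB0 ((hgiff k).2 hga),
            mv_gate E F σ₀ m₀ x hτeq hτsub hga]
          refine le_inf ?_ ?_
          · refine le_trans inf_le_left ?_
            refine le_trans (mf_face_le_one F ρ hiρ _) ?_
            exact le_of_eq (mf_congr F (face ρ i) (hdτ k m))
          · refine le_iInf fun l => ?_
            have hlρ : l.1 ∈ ρ.1 := (Finset.erase_subset i ρ.1) l.2
            have hli : l.1 ≠ i := (Finset.mem_erase.1 l.2).1
            refine le_trans inf_le_right (le_trans (iInf_le _ ⟨l.1, hlρ⟩) ?_)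
            rw [hIHl ⟨l.1, hlρ⟩ hli]
            exact le_iSup (fun k : ℕ => moveFun E F σ₀ m₀ x (face ρ l.1) (m + (k:ℤ) • d)) k

lemma mv_chain_bot : ∀ (σ : Cone n) (ms : ℤ → Fin n → ℤ),
    (∀ i : ℤ, dualLt n σ (ms (i - 1)) (ms i)) →
    ∃ i₀ : ℤ, ∀ i ≤ i₀, moveFun E F σ₀ m₀ x σ (ms i) = ⊥ := by
  intro σ ms hch
  obtain ⟨i₀, hbot⟩ := F.chain_bot σ ms hch
  refine ⟨i₀, fun i hi => ?_⟩
  rw [eq_bot_iff, ← hbot i hi]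
  exact mv_le_F E F σ₀ m₀ x hEF hx1 σ (ms i)

lemma mv_top (hσ₀ne : σ₀.1.Nonempty) : ∀ σ : Cone n, σ.1 = ∅ → ∀ m,
    moveFun E F σ₀ m₀ x σ m = ⊤ := by
  intro σ hσ m
  have hne : σ ≠ σ₀ := by
    intro h
    rw [← h, hσ] at hσ₀ne
    exact absurd hσ₀ne (by simp)
  rw [mv_off E F σ₀ m₀ x hne (fun hcon => by
    obtain ⟨j, hj⟩ := hσ₀ne
    exact absurd (hσ ▸ hcon.1 hj) (Finset.notMem_empty j))]
  exact E.top_of_empty σ hσ m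

lemma mv_facet_all : ∀ σ τ : Cone n, τ.1 ⊆ σ.1 → τ.1.card + 1 = σ.1.card →
    ∀ mτ : Fin n → ℤ, dualLe n σ 0 mτ → inPerp n τ mτ →
    (∀ w : Fin n → ℤ, inPerp n τ w ↔ ∃ (v : Fin n → ℤ) (k : ℤ), inPerp n σ v ∧ w = v + k • mτ) →
    ∀ m, moveFun E F σ₀ m₀ x τ m = ⨆ k : ℕ, moveFun E F σ₀ m₀ x σ (m + (k : ℤ) • mτ) := by
  intro σ τ hsub hcard mτ h1 h2 h3 m
  -- identify the missing ray
  have hex : ∃ i ∈ σ.1, i ∉ τ.1 := by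
    by_contra hcon
    push_neg at hcon
    have h5 : σ.1 = τ.1 := Finset.Subset.antisymm hcon hsub
    rw [h5] at hcard
    omega
  obtain ⟨i, hiσ, hiτ⟩ := hex
  have hτ1 : τ.1 = σ.1.erase i := by
    apply Finset.eq_of_subset_of_card_le
    · intro j hj
      exact Finset.mem_erase.2 ⟨fun h => hiτ (h ▸ hj), hsub hj⟩
    · rw [Finset.card_erase_of_mem hiσ]
      omega
  have hτface : τ = face σ i := Subtype.ext hτ1
  have hdperp : inPerp n τ (dvec n σ i) := by
    intro j hj
    rw [hτ1, Finset.mem_erase] at hj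
    exact dvec_other n σ i hiσ hj.2 hj.1
  obtain ⟨v, k, hv, heq⟩ := (h3 (dvec n σ i)).1 hdperp
  have hk1 : k = 1 ∧ pair n mτ i = 1 := by
    have e1 : pair n (dvec n σ i) i = 1 := dvec_self n σ i hiσ
    have e2 : pair n v i = 0 := hv i hiσ
    have e3 : pair n (dvec n σ i) i = pair n v i + k * pair n mτ i := by
      rw [heq, pair_add, pair_smul]
    have e4 : 0 ≤ pair n mτ i := by
      have := h1 i hiσ
      rwa [show mτ - 0 = mτ by abel] at this
    have e5 : k * pair n mτ i = 1 := by omega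
    rcases Int.mul_eq_one_iff_eq_one_or_neg_one.1 e5 with ⟨ha, hb⟩ | ⟨ha, hb⟩
    · exact ⟨ha, hb⟩
    · omega
  have hpv : ∀ j ∈ σ.1, pair n (dvec n σ i) j - pair n mτ j = pair n v j := by
    intro j hj
    have : pair n (dvec n σ i) j = pair n v j + k * pair n mτ j := by
      rw [heq, pair_add, pair_smul]
    rw [hk1.1] at this
    omega
  rw [hτface, mv_facet_gen E F σ₀ m₀ x hEF hdom hx1 hx2 hB σ.1.card σ rfl σ
    (Finset.Subset.refl _) i hiσ hiσ m]
  refine iSup_congr fun k' => ?_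
  refine mv_congr' E F σ₀ m₀ x hEF hdom hx1 hx2 hB ?_
  intro j hj
  rw [pair_sub, pair_add, pair_add, pair_smul, pair_smul]
  have h6 := hpv j hj
  have h7 := hv j hj
  nlinarith [hpv j hj, hv j hj]

end MoveFacet

section Support

noncomputable def basePts (E F : MultiFilt n V) (m₀ : Fin n → ℤ) : Finset (Fin n → ℤ) :=
  ((suppF E ∪ suppF F).image Prod.snd) ∪ {m₀}

noncomputable def valsB (E F : MultiFilt n V) (m₀ : Fin n → ℤ) : Finset ℤ :=
  ((basePts E F m₀) ×ˢ (Finset.univ : Finset (Fin (n+1)))).image (fun z => pair n z.1 z.2)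

lemma valsB_nonempty (E F : MultiFilt n V) (m₀ : Fin n → ℤ) : (valsB E F m₀).Nonempty := by
  refine Finset.image_nonempty.2 (Finset.Nonempty.product ?_ Finset.univ_nonempty)
  exact ⟨m₀, by simp [basePts]⟩

noncomputable def Lb (E F : MultiFilt n V) (m₀ : Fin n → ℤ) : ℤ :=
  (valsB E F m₀).min' (valsB_nonempty E F m₀)

noncomputable def Ub (E F : MultiFilt n V) (m₀ : Fin n → ℤ) : ℤ :=
  (valsB E F m₀).max' (valsB_nonempty E F m₀)

lemma Lb_le_Ub (E F : MultiFilt n V) (m₀ : Fin n → ℤ) : Lb E F m₀ ≤ Ub E F m₀ :=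
  Finset.min'_le _ _ (Finset.max'_mem _ _)

lemma base_bounds {E F : MultiFilt n V} {m₀ p : Fin n → ℤ} (hp : p ∈ basePts E F m₀)
    (i : Fin (n+1)) : Lb E F m₀ ≤ pair n p i ∧ pair n p i ≤ Ub E F m₀ := by
  have hmem : pair n p i ∈ valsB E F m₀ := by
    refine Finset.mem_image.2 ⟨(p, i), ?_, rfl⟩
    exact Finset.mem_product.2 ⟨hp, Finset.mem_univ i⟩
  exact ⟨Finset.min'_le _ _ hmem, Finset.le_max' _ _ hmem⟩

lemma m₀_mem_base (E F : MultiFilt n V) (m₀ : Fin n → ℤ) : m₀ ∈ basePts E F m₀ := by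
  simp [basePts]

lemma suppE_mem_base {E F : MultiFilt n V} {m₀ : Fin n → ℤ}
    {q : Cone n × (Fin n → ℤ)} (hq : q ∈ suppF E) : q.2 ∈ basePts E F m₀ := by
  simp only [basePts, Finset.mem_union, Finset.mem_image]
  exact Or.inl ⟨q, Or.inl hq, rfl⟩

lemma suppFF_mem_base {E F : MultiFilt n V} {m₀ : Fin n → ℤ}
    {q : Cone n × (Fin n → ℤ)} (hq : q ∈ suppF F) : q.2 ∈ basePts E F m₀ := by
  simp only [basePts, Finset.mem_union, Finset.mem_image]
  exact Or.inl ⟨q, Or.inr hq, rfl⟩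

variable (hEF : ∀ σ m, E.E σ m ≤ F.E σ m)
variable (hdom : Dominated E F σ₀.1.card)
variable (hx1 : x ∈ F.E σ₀ m₀) (hx2 : x ∉ E.E σ₀ m₀)
variable (hB : ∀ i ∈ σ₀.1, x ∈ E.E σ₀ (m₀ + dvec n σ₀ i))
variable (hσ₀ne : σ₀.1.Nonempty)

include hEF hdom hx1 hx2 hB hσ₀ne

lemma mv_bounds : ∀ (σ : Cone n) (m : Fin n → ℤ),
    ¬ (moveFun E F σ₀ m₀ x σ m : Set V)
      ⊆ (⋃ m' ∈ {m' | dualLt n σ m' m}, (moveFun E F σ₀ m₀ x σ m' : Set V)) →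
    ∀ i ∈ σ.1, Lb E F m₀ ≤ pair n m i ∧ pair n m i ≤ Ub E F m₀ := by
  suffices h : ∀ (c : ℕ) (σ : Cone n), σ.1.card = c → ∀ (m : Fin n → ℤ),
      ¬ (moveFun E F σ₀ m₀ x σ m : Set V)
        ⊆ (⋃ m' ∈ {m' | dualLt n σ m' m}, (moveFun E F σ₀ m₀ x σ m' : Set V)) →
      ∀ i ∈ σ.1, Lb E F m₀ ≤ pair n m i ∧ pair n m i ≤ Ub E F m₀ by
    intro σ m; exact h σ.1.card σ rfl m
  intro c
  induction c using Nat.strong_induction_on with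
  | _ c IH =>
    intro σ hc m hunc i hi
    by_cases hgate : σ ≠ σ₀ ∧ σ₀.1 ⊆ σ.1 ∧ dualLe n σ₀ m m₀
    case neg =>
      -- outside the gate : the value is E's (or on the σ₀-coset)
      by_cases hs : σ = σ₀
      · by_cases hco : inPerp n σ₀ (m - m₀)
        · -- on the coset : bounds from m₀
          have h1 := hco i (hs ▸ hi)
          rw [pair_sub] at h1
          have h2 := base_bounds (m₀_mem_base E F m₀) i
          constructor <;> omega
        · -- value is E's
          have hval : moveFun E F σ₀ m₀ x σ m = E.E σ m := by
            rw [hs]; exact mv_self_off E F σ₀ m₀ x hco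
          have huncE : ¬ (E.E σ m : Set V)
              ⊆ (⋃ m' ∈ {m' | dualLt n σ m' m}, (E.E σ m' : Set V)) := by
            intro hcon
            refine hunc ?_
            rw [hval]
            refine hcon.trans ?_
            refine Set.iUnion₂_mono fun m' hm' => ?_
            exact_mod_cast mv_ge_E E F σ₀ m₀ x hEF σ m'
          obtain ⟨q, hq, hq1, hqperp⟩ := suppF_spec E σ m huncE
          have h1 := hqperp i hi
          rw [pair_sub] at h1
          have h2 := base_bounds (suppE_mem_base (F := F) (m₀ := m₀) hq) i
          constructor <;> omega
      · push_neg at hgate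
        have hval : moveFun E F σ₀ m₀ x σ m = E.E σ m :=
          mv_off E F σ₀ m₀ x hs (fun hcon => by
            have := hgate hs
            tauto)
        have huncE : ¬ (E.E σ m : Set V)
            ⊆ (⋃ m' ∈ {m' | dualLt n σ m' m}, (E.E σ m' : Set V)) := by
          intro hcon
          refine hunc ?_
          rw [hval]
          refine hcon.trans ?_
          refine Set.iUnion₂_mono fun m' hm' => ?_
          exact_mod_cast mv_ge_E E F σ₀ m₀ x hEF σ m'
        obtain ⟨q, hq, hq1, hqperp⟩ := suppF_spec E σ m huncE
        have h1 := hqperp i hi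
        rw [pair_sub] at h1
        have h2 := base_bounds (suppE_mem_base (F := F) (m₀ := m₀) hq) i
        constructor <;> omega
    case pos =>
      obtain ⟨hne, hsub0, hga⟩ := hgate
      -- a nonzero uncovered witness
      obtain ⟨y, hy, hyn⟩ := Set.not_subset.1 hunc
      have hσne : σ.1.Nonempty := ⟨hσ₀ne.choose, hsub0 hσ₀ne.choose_spec⟩
      have hy0 : y ≠ 0 := by
        rintro rfl
        refine hyn ?_
        simp only [Set.mem_iUnion, Set.mem_setOf_eq, SetLike.mem_coe]
        refine ⟨m - Dsum σ, ⟨?_, ?_⟩, Submodule.zero_mem _⟩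
        · intro j hj
          rw [pair_sub, pair_sub, pair_Dsum σ hj]
          omega
        · intro hcon
          obtain ⟨j, hj⟩ := hσne
          have := hcon j hj
          rw [pair_sub, pair_sub, pair_Dsum σ hj] at this
          omega
      constructor
      · -- lower bound via F-descent
        have hyF : y ∈ F.E σ m := mv_le_F E F σ₀ m₀ x hEF hx1 σ m hy
        obtain ⟨j, hjle, hjmem, hjmin, q, hq, hq1, hqperp⟩ :=
          descend_support F σ m y hyF hy0
        have h1 := hqperp i hi
        have h2 := hjle i hi
        rw [pair_sub] at h1 h2
        have h3 := base_bounds (suppFF_mem_base (E := E) (m₀ := m₀) hq) i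
        omega
      · -- upper bound
        by_contra hU
        push_neg at hU
        set d' : Fin n → ℤ := dvec n σ i with hd'
        have hd'0 : ∀ j ∈ σ.1, j ≠ i → pair n d' j = 0 := fun j hj hji =>
          dvec_other n σ i hi hj hji
        have hd'1 : pair n d' i = 1 := dvec_self n σ i hi
        have hgam : dualLe n σ₀ (m - d') m₀ := by
          intro j hj
          have h1 := hga j hj
          have h2 : 0 ≤ pair n d' j := by
            rw [hd']; exact pair_dvec_nonneg σ hi (hsub0 hj)
          rw [pair_sub] at h1 ⊢
          rw [pair_sub]
          omega
        have hsubset : (moveFun E F σ₀ m₀ x σ m : Set V)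
            ⊆ (moveFun E F σ₀ m₀ x σ (m - d') : Set V) := by
          intro z hz
          rcases eq_or_ne z 0 with rfl | hz0
          · exact Submodule.zero_mem _
          rw [SetLike.mem_coe, mv_gate E F σ₀ m₀ x hne hsub0 hga] at hz
          rw [SetLike.mem_coe, mv_gate E F σ₀ m₀ x hne hsub0 hgam]
          refine Submodule.mem_inf.2 ⟨?_, ?_⟩
          · -- z ∈ F at m - d'
            have hzF : z ∈ F.E σ m := (Submodule.mem_inf.1 hz).1
            obtain ⟨j, hjle, hjmem, hjmin, q, hq, hq1, hqperp⟩ :=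
              descend_support F σ m z hzF hz0
            refine F.mono σ j (m - d') ?_ hjmem
            intro l hl
            rw [pair_sub, pair_sub]
            rcases eq_or_ne l i with rfl | hli
            · have h1 := hqperp l hl
              rw [pair_sub] at h1
              have h2 := (base_bounds (suppFF_mem_base (E := E) (m₀ := m₀) hq) l).2
              omega
            · have h2 := hjle l hl
              rw [pair_sub] at h2
              rw [hd'0 l hl hli]
              omega
          · refine (Submodule.mem_iInf _).2 fun l => ?_
            have hzl : z ∈ moveFun E F σ₀ m₀ x (face σ l.1) m :=
              (Submodule.mem_iInf _).1 (Submodule.mem_inf.1 hz).2 l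
            rcases eq_or_ne l.1 i with hli | hli
            · have hcongr : moveFun E F σ₀ m₀ x (face σ l.1) m
                  = moveFun E F σ₀ m₀ x (face σ l.1) (m - d') := by
                refine mv_congr' E F σ₀ m₀ x hEF hdom hx1 hx2 hB ?_
                intro j hj
                simp only [face, Finset.mem_erase] at hj
                rw [pair_sub, pair_sub, hd'0 j hj.2 (by rw [← hli]; exact hj.1)]
                ring
              rw [← hcongr]
              exact hzl
            · obtain ⟨j, hjle, hjmem, hjmin⟩ :=
                descend_min_fun (moveFun E F σ₀ m₀ x)
                  (mv_chain_bot E F σ₀ m₀ x hEF hdom hx1 hx2 hB)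
                  (face σ l.1) m z hzl hz0
              have huncj : ¬ (moveFun E F σ₀ m₀ x (face σ l.1) j : Set V)
                  ⊆ (⋃ m' ∈ {m' | dualLt n (face σ l.1) m' j},
                    (moveFun E F σ₀ m₀ x (face σ l.1) m' : Set V)) := by
                intro hcon
                have := hcon hjmem
                simp only [Set.mem_iUnion, Set.mem_setOf_eq, SetLike.mem_coe] at this
                obtain ⟨j', hj', hmemj'⟩ := this
                exact hjmin j' hj' hmemj'
              have hcd : (face σ l.1).1.card < c := by
                rw [← hc]; exact Finset.card_erase_lt_of_mem l.2
              have hil : i ∈ (face σ l.1).1 :=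
                Finset.mem_erase.2 ⟨fun h => hli (h.symm ▸ rfl), hi⟩
              have hbj := IH (face σ l.1).1.card hcd (face σ l.1) rfl j huncj
              refine mv_mono E F σ₀ m₀ x hEF hdom hx1 hx2 hB (face σ l.1) j (m - d')
                ?_ hjmem
              intro l' hl'
              rw [pair_sub, pair_sub]
              rcases eq_or_ne l' i with rfl | hl'i
              · have h1 := (hbj l' hil).2
                omega
              · have h2 := hjle l' hl'
                rw [pair_sub] at h2
                rw [hd'0 l' ((Finset.erase_subset l.1 σ.1) hl') hl'i]
                omega
        refine hyn ?_
        simp only [Set.mem_iUnion, Set.mem_setOf_eq, SetLike.mem_coe]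
        refine ⟨m - d', ⟨?_, ?_⟩, hsubset hy⟩
        · intro j hj
          rw [pair_sub, pair_sub]
          have h9 : 0 ≤ pair n d' j := by rw [hd']; exact pair_dvec_nonneg σ hi hj
          omega
        · intro hcon
          have := hcon i hi
          rw [pair_sub, pair_sub, hd'1] at this
          omega

lemma mv_finite_support :
    ∃ S : Finset (Cone n × (Fin n → ℤ)), ∀ (σ : Cone n) (m : Fin n → ℤ),
      ¬ (moveFun E F σ₀ m₀ x σ m : Set V)
        ⊆ (⋃ m' ∈ {m' | dualLt n σ m' m}, (moveFun E F σ₀ m₀ x σ m' : Set V)) →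
      ∃ q ∈ S, q.1 = σ ∧ inPerp n σ (m - q.2) := by
  classical
  refine ⟨Finset.univ.biUnion (fun σ : Cone n =>
    ((Fintype.piFinset (fun _ : Fin (n+1) => Finset.Icc (Lb E F m₀) (Ub E F m₀))).image
      (fun c => (σ, rvec σ c)))), ?_⟩
  intro σ m hunc
  have hb := mv_bounds E F σ₀ m₀ x hEF hdom hx1 hx2 hB hσ₀ne σ m hunc
  set cfun : Fin (n+1) → ℤ := fun i => if i ∈ σ.1 then pair n m i else Lb E F m₀ with hcfun
  refine ⟨(σ, rvec σ cfun), ?_, rfl, ?_⟩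
  · refine Finset.mem_biUnion.2 ⟨σ, Finset.mem_univ σ, ?_⟩
    refine Finset.mem_image.2 ⟨cfun, ?_, rfl⟩
    refine Fintype.mem_piFinset.2 fun i => ?_
    rw [Finset.mem_Icc]
    by_cases hiσ : i ∈ σ.1
    · simp only [cfun, if_pos hiσ]
      exact ⟨(hb i hiσ).1, (hb i hiσ).2⟩
    · simp only [cfun, if_neg hiσ]
      exact ⟨le_refl _, Lb_le_Ub E F m₀⟩
  · intro j hj
    rw [pair_sub, pair_rvec σ cfun hj]
    simp only [cfun, if_pos hj]
    ring

end Support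

section Bundle

variable (hEF : ∀ σ m, E.E σ m ≤ F.E σ m)
variable (hdom : Dominated E F σ₀.1.card)
variable (hx1 : x ∈ F.E σ₀ m₀) (hx2 : x ∉ E.E σ₀ m₀)
variable (hB : ∀ i ∈ σ₀.1, x ∈ E.E σ₀ (m₀ + dvec n σ₀ i))
variable (hσ₀ne : σ₀.1.Nonempty)

noncomputable def moveMF
    (hEF : ∀ σ m, E.E σ m ≤ F.E σ m)
    (hdom : Dominated E F σ₀.1.card)
    (hx1 : x ∈ F.E σ₀ m₀) (hx2 : x ∉ E.E σ₀ m₀)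
    (hB : ∀ i ∈ σ₀.1, x ∈ E.E σ₀ (m₀ + dvec n σ₀ i))
    (hσ₀ne : σ₀.1.Nonempty) : MultiFilt n V where
  E := moveFun E F σ₀ m₀ x
  mono := mv_mono E F σ₀ m₀ x hEF hdom hx1 hx2 hB
  top_of_empty := mv_top E F σ₀ m₀ x hEF hdom hx1 hx2 hB hσ₀ne
  chain_bot := mv_chain_bot E F σ₀ m₀ x hEF hdom hx1 hx2 hB
  finite_support := mv_finite_support E F σ₀ m₀ x hEF hdom hx1 hx2 hB hσ₀ne
  facet_union := mv_facet_all E F σ₀ m₀ x hEF hdom hx1 hx2 hB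

include hEF hdom hx1 hx2 hB hσ₀ne

lemma mv_inf : ∀ (σ : Cone n), σ₀.1 ⊆ σ.1 → σ ≠ σ₀ → ∀ m, dualLe n σ₀ m m₀ →
    moveFun E F σ₀ m₀ x σ m ⊓ E.E σ₀ m₀ = E.E σ m := by
  suffices h : ∀ (c : ℕ) (σ : Cone n), σ.1.card = c → σ₀.1 ⊆ σ.1 → σ ≠ σ₀ →
      ∀ m, dualLe n σ₀ m m₀ →
      moveFun E F σ₀ m₀ x σ m ⊓ E.E σ₀ m₀ = E.E σ m by
    intro σ h1 h2 m h3; exact h σ.1.card σ rfl h1 h2 m h3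
  intro c
  induction c using Nat.strong_induction_on with
  | _ c IH =>
    intro σ hc hsub0 hne m hga
    apply le_antisymm
    · intro y hy
      obtain ⟨hy1, hy2⟩ := Submodule.mem_inf.1 hy
      rw [mv_gate E F σ₀ m₀ x hne hsub0 hga] at hy1
      obtain ⟨hyF, hyI⟩ := Submodule.mem_inf.1 hy1
      have hyfaces : ∀ l : {j // j ∈ σ.1}, y ∈ E.E (face σ l.1) m := by
        intro l
        have hyl : y ∈ moveFun E F σ₀ m₀ x (face σ l.1) m :=
          (Submodule.mem_iInf _).1 hyI l
        by_cases hlσ₀ : l.1 ∈ σ₀.1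
        · -- face not above σ₀, value is E's
          have h1 : face σ l.1 ≠ σ₀ := by
            intro h
            have : l.1 ∈ (face σ l.1).1 := h ▸ hlσ₀
            simp [face] at this
          have h2 : ¬ (σ₀.1 ⊆ (face σ l.1).1) := by
            intro h
            have : l.1 ∈ (face σ l.1).1 := h hlσ₀
            simp [face] at this
          rwa [mv_off E F σ₀ m₀ x h1 (fun hcon => h2 hcon.1)] at hyl
        · have hfsub : σ₀.1 ⊆ (face σ l.1).1 := fun j hj =>
            Finset.mem_erase.2 ⟨fun h => hlσ₀ (h ▸ hj), hsub0 hj⟩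
          rcases eq_or_ne (face σ l.1) σ₀ with hfe | hfne
          · by_cases hco : inPerp n σ₀ (m - m₀)
            · have hEm : E.E σ₀ m = E.E σ₀ m₀ :=
                mf_congr E σ₀ (show inPerp n σ₀ (m₀ - m) by
                  intro j hj; have := hco j hj; rw [pair_sub] at *; omega)
              rw [hfe, mv_coset E F σ₀ m₀ x hco] at hyl
              have : y ∈ (E.E σ₀ m ⊔ (ℂ ∙ x)) ⊓ E.E σ₀ m₀ := Submodule.mem_inf.2 ⟨hyl, hy2⟩
              rw [hEm, sup_span_inf le_rfl hx2] at this
              rw [hfe, hEm]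
              exact this
            · rw [hfe, mv_self_off E F σ₀ m₀ x hco] at hyl
              rw [hfe]
              exact hyl
          · have hcd : (face σ l.1).1.card < c := by
              rw [← hc]; exact Finset.card_erase_lt_of_mem l.2
            rw [← IH (face σ l.1).1.card hcd (face σ l.1) rfl hfsub hfne m hga]
            exact Submodule.mem_inf.2 ⟨hyl, hy2⟩
      have hcard : σ₀.1.card < σ.1.card := cone_ssubset_card σ₀ hsub0 hne
      rw [hdom σ hcard m]
      exact Submodule.mem_inf.2 ⟨hyF, (Submodule.mem_iInf _).2 hyfaces⟩
    · refine le_inf (mv_ge_E E F σ₀ m₀ x hEF σ m) ?_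
      refine le_trans (mf_face_mono E σ σ₀ hsub0 m) (E.mono σ₀ m m₀ hga)

lemma mv_elementary :
    IsElementary E (moveMF E F σ₀ m₀ x hEF hdom hx1 hx2 hB hσ₀ne) σ₀.1.card σ₀ m₀ := by
  constructor
  · exact mv_ge_E E F σ₀ m₀ x hEF
  · rfl
  · -- eq_of_lt
    intro σ m hlt
    have hne : σ ≠ σ₀ := fun h => by rw [h] at hlt; omega
    have hnsub : ¬ σ₀.1 ⊆ σ.1 := fun h => by
      have := Finset.card_le_card h
      omega
    exact (mv_off E F σ₀ m₀ x hne (fun hcon => hnsub hcon.1)).symm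
  · -- ne_iff
    intro σ m hcard
    constructor
    · intro hne
      by_cases hs : σ = σ₀
      · refine ⟨hs, ?_⟩
        by_contra hco
        refine hne ?_
        have : moveFun E F σ₀ m₀ x σ m = E.E σ m := by
          rw [hs]; exact mv_self_off E F σ₀ m₀ x hco
        rw [show (moveMF E F σ₀ m₀ x hEF hdom hx1 hx2 hB hσ₀ne).E σ m
          = moveFun E F σ₀ m₀ x σ m from rfl, this]
      · exfalso
        refine hne ?_
        have hnsub : ¬ σ₀.1 ⊆ σ.1 := by
          intro h
          have h2 : σ₀.1 = σ.1 := Finset.eq_of_subset_of_card_le h (by omega)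
          exact hs (Subtype.ext h2.symm)
        exact (mv_off E F σ₀ m₀ x hs (fun hcon => hnsub hcon.1)).symm
    · rintro ⟨hs, hco⟩
      rw [show (moveMF E F σ₀ m₀ x hEF hdom hx1 hx2 hB hσ₀ne).E σ m
        = moveFun E F σ₀ m₀ x σ m from rfl]
      subst hs
      rw [mv_coset E F σ m₀ x hco]
      intro hcon
      have hxmem : x ∈ E.E σ m ⊔ (ℂ ∙ x) :=
        Submodule.mem_sup_right (Submodule.mem_span_singleton_self x)
      rw [← hcon] at hxmem
      exact x_notmem_coset E σ m₀ x hx2 hco hxmem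
  · -- rank_step
    have hco : inPerp n σ₀ (m₀ - m₀) := by
      intro j hj
      rw [pair_sub]
      ring
    rw [show (moveMF E F σ₀ m₀ x hEF hdom hx1 hx2 hB hσ₀ne).E σ₀ m₀
      = moveFun E F σ₀ m₀ x σ₀ m₀ from rfl, mv_coset E F σ₀ m₀ x hco]
    exact finrank_sup_span hx2
  · -- eq_of_gt
    intro σ m hgt hcon
    have hne : σ ≠ σ₀ := fun h => by rw [h] at hgt; omega
    refine (mv_off E F σ₀ m₀ x hne (fun hc2 => hcon ⟨?_, hc2.2⟩)).symm
    exact Finset.ssubset_iff_subset_ne.2 ⟨hc2.1, fun h => hne (Subtype.ext h.symm)⟩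
  · -- inf_of_gt
    intro σ m hgt hss hga
    have hne : σ ≠ σ₀ := fun h => by rw [h] at hgt; omega
    exact (mv_inf E F σ₀ m₀ x hEF hdom hx1 hx2 hB hσ₀ne σ hss.1 hne m hga).symm

lemma mv_dom : Dominated (moveMF E F σ₀ m₀ x hEF hdom hx1 hx2 hB hσ₀ne) F σ₀.1.card := by
  intro σ hcard m
  have hne : σ ≠ σ₀ := fun h => by rw [h] at hcard; omega
  rw [show (moveMF E F σ₀ m₀ x hEF hdom hx1 hx2 hB hσ₀ne).E = moveFun E F σ₀ m₀ x from rfl]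
  by_cases hgate : σ₀.1 ⊆ σ.1 ∧ dualLe n σ₀ m m₀
  · exact mv_gate E F σ₀ m₀ x hne hgate.1 hgate.2
  · rw [mv_off E F σ₀ m₀ x hne hgate]
    have hfoff : ∀ l : {j // j ∈ σ.1},
        moveFun E F σ₀ m₀ x (face σ l.1) m = E.E (face σ l.1) m := by
      intro l
      rcases eq_or_ne (face σ l.1) σ₀ with hfe | hfne
      · rw [hfe]
        refine mv_self_off E F σ₀ m₀ x (fun hco => hgate ⟨?_, dualLe_of_inPerp' hco⟩)
        rw [← hfe]
        exact Finset.erase_subset l.1 σ.1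
      · refine mv_off E F σ₀ m₀ x hfne (fun hcon => hgate ⟨?_, hcon.2⟩)
        exact hcon.1.trans (Finset.erase_subset l.1 σ.1)
    have : (⨅ l : {j // j ∈ σ.1}, moveFun E F σ₀ m₀ x (face σ l.1) m)
        = ⨅ l : {j // j ∈ σ.1}, E.E (face σ l.1) m := by
      exact iInf_congr fun l => hfoff l
    rw [this]
    exact hdom σ hcard m

lemma mv_le_F' : ∀ σ m, (moveMF E F σ₀ m₀ x hEF hdom hx1 hx2 hB hσ₀ne).E σ m ≤ F.E σ m :=
  mv_le_F E F σ₀ m₀ x hEF hx1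

end Bundle

-- ### outer machinery : corners, extraction, measure

lemma mf_ext {A B : MultiFilt n V} (h : A.E = B.E) : A = B := by
  cases A; cases B
  cases h
  rfl

noncomputable def cornerVal (G F : MultiFilt n V) (σ : Cone n) (m : Fin n → ℤ) :
    Submodule ℂ V :=
  F.E σ m ⊓ ⨅ l : {j // j ∈ σ.1}, G.E (face σ l.1) m

lemma cornerVal_ge (G F : MultiFilt n V) (hGF : ∀ σ m, G.E σ m ≤ F.E σ m)
    (σ : Cone n) (m : Fin n → ℤ) : G.E σ m ≤ cornerVal G F σ m := by
  refine le_inf (hGF σ m) (le_iInf fun l => ?_)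
  exact mf_face_le_one G σ l.2 m

lemma cornerVal_congr (G F : MultiFilt n V) (σ : Cone n) {m m' : Fin n → ℤ}
    (h : inPerp n σ (m' - m)) : cornerVal G F σ m = cornerVal G F σ m' := by
  unfold cornerVal
  rw [mf_congr F σ h]
  congr 1
  refine iInf_congr fun l => ?_
  refine mf_congr G (face σ l.1) ?_
  intro j hj
  exact h j ((Finset.erase_subset l.1 σ.1) hj)

lemma dominated_iff (G F : MultiFilt n V) (k : ℕ) :
    Dominated G F k ↔ ∀ σ : Cone n, k < σ.1.card → ∀ m, G.E σ m = cornerVal G F σ m :=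
  Iff.rfl

lemma corner_empty (G F : MultiFilt n V) (σ : Cone n) (hσ : σ.1.card = 0) (m : Fin n → ℤ) :
    G.E σ m = cornerVal G F σ m := by
  have hσe : σ.1 = ∅ := Finset.card_eq_zero.1 hσ
  have : IsEmpty {j // j ∈ σ.1} :=
    ⟨fun l => (Finset.eq_empty_iff_forall_notMem.1 hσe) l.1 l.2⟩
  simp [cornerVal, G.top_of_empty σ hσe, F.top_of_empty σ hσe, iInf_of_isEmpty]

lemma dom_eq (G F : MultiFilt n V) [FiniteDimensional ℂ V] (h : Dominated G F 0) : G = F := by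
  refine mf_ext ?_
  funext σ m
  suffices hh : ∀ (c : ℕ) (σ : Cone n), σ.1.card = c → ∀ m, G.E σ m = F.E σ m by
    exact hh σ.1.card σ rfl m
  intro c
  induction c using Nat.strong_induction_on with
  | _ c IH =>
    intro σ hc m
    rcases Nat.eq_zero_or_pos c with rfl | hpos
    · have hσe : σ.1 = ∅ := Finset.card_eq_zero.1 hc
      rw [G.top_of_empty σ hσe, F.top_of_empty σ hσe]
    · rw [h σ (by omega) m]
      have hfaces : ∀ l : {j // j ∈ σ.1}, G.E (face σ l.1) m = F.E (face σ l.1) m := by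
        intro l
        exact IH (face σ l.1).1.card (by rw [← hc]; exact Finset.card_erase_lt_of_mem l.2)
          (face σ l.1) rfl m
      rw [iInf_congr hfaces]
      refine le_antisymm inf_le_left (le_inf le_rfl (le_iInf fun l => ?_))
      exact mf_face_le_one F σ l.2 m

section Corners

variable [FiniteDimensional ℂ V] (G F : MultiFilt n V)
variable (hGF : ∀ σ m, G.E σ m ≤ F.E σ m)

-- bounds for corner positions
include hGF in
lemma corner_bounds (σ : Cone n) (m : Fin n → ℤ)
    (hcor : G.E σ m ≠ cornerVal G F σ m) :
    ∀ i ∈ σ.1, Lb G F 0 ≤ pair n m i ∧ pair n m i ≤ Ub G F 0 := by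
  intro i hi
  have hlt : ¬ (cornerVal G F σ m ≤ G.E σ m) := fun hle =>
    hcor (le_antisymm (cornerVal_ge G F hGF σ m) hle)
  obtain ⟨y, hy, hyn⟩ := SetLike.not_le_iff_exists.1 hlt
  have hy0 : y ≠ 0 := fun h => hyn (h ▸ (G.E σ m).zero_mem)
  constructor
  · -- lower bound via F
    have hyF : y ∈ F.E σ m := (Submodule.mem_inf.1 hy).1
    obtain ⟨j, hjle, hjmem, hjmin, q, hq, hq1, hqperp⟩ := descend_support F σ m y hyF hy0
    have h1 := hqperp i hi
    have h2 := hjle i hi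
    rw [pair_sub] at h1 h2
    have h3 := base_bounds (suppFF_mem_base (E := G) (m₀ := 0) hq) i
    omega
  · -- upper bound via G-descent
    by_contra hU
    push_neg at hU
    have hyface : y ∈ G.E (face σ i) m :=
      (Submodule.mem_iInf _).1 (Submodule.mem_inf.1 hy).2 ⟨i, hi⟩
    obtain ⟨K, hK1, hK2⟩ := mf_face_attained G σ hi m
    rw [hK1] at hyface
    obtain ⟨j, hjle, hjmem, hjmin, q, hq, hq1, hqperp⟩ :=
      descend_support G σ (m + (K:ℤ) • dvec n σ i) y hyface hy0
    have hjlem : dualLe n σ j m := by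
      intro l hl
      have h2 := hjle l hl
      rw [pair_sub] at h2 ⊢
      rw [pair_add, pair_smul] at h2
      rcases eq_or_ne l i with rfl | hli
      · have h1 := hqperp l hl
        rw [pair_sub] at h1
        have h3 := (base_bounds (suppE_mem_base (F := F) (m₀ := 0) hq) l).2
        omega
      · rw [dvec_other n σ i hi hl hli] at h2
        omega
    exact hyn (G.mono σ j m hjlem hjmem)

lemma rvec_add (σ : Cone n) (c c' : Fin (n+1) → ℤ) :
    rvec σ (c + c') = rvec σ c + rvec σ c' := by
  unfold rvec
  rw [← Finset.sum_add_distrib]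
  refine Finset.sum_congr rfl fun j hj => ?_
  simp [add_smul]

lemma rvec_single (σ : Cone n) {i : Fin (n+1)} (hi : i ∈ σ.1) :
    rvec σ (Pi.single i 1) = dvec n σ i := by
  unfold rvec
  rw [Finset.sum_eq_single i]
  · simp
  · intro j hj hji
    rw [Pi.single_apply, if_neg hji, zero_smul]
  · intro h; exact absurd hi h

lemma rvec_zero (σ : Cone n) : rvec σ 0 = 0 := by
  unfold rvec
  refine Finset.sum_eq_zero fun j hj => ?_
  simp

include hGF in
lemma corner_extract (σ₀ : Cone n) (m : Fin n → ℤ)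
    (hcor : G.E σ₀ m ≠ cornerVal G F σ₀ m) :
    ∃ (m₀ : Fin n → ℤ) (x : V), x ∈ F.E σ₀ m₀ ∧ x ∉ G.E σ₀ m₀ ∧
      (∀ i ∈ σ₀.1, x ∈ G.E σ₀ (m₀ + dvec n σ₀ i)) ∧
      G.E σ₀ m₀ ≠ cornerVal G F σ₀ m₀ := by
  classical
  have hlt : ¬ (cornerVal G F σ₀ m ≤ G.E σ₀ m) := fun hle =>
    hcor (le_antisymm (cornerVal_ge G F hGF σ₀ m) hle)
  obtain ⟨y, hy, hyn⟩ := SetLike.not_le_iff_exists.1 hlt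
  have hyF : y ∈ F.E σ₀ m := (Submodule.mem_inf.1 hy).1
  -- choose attained bounds for each direction
  have hKex : ∀ i : {j // j ∈ σ₀.1}, ∃ K : ℕ, y ∈ G.E σ₀ (m + (K:ℤ) • dvec n σ₀ i.1) := by
    intro i
    obtain ⟨K, hK1, hK2⟩ := mf_face_attained G σ₀ i.2 m
    have : y ∈ G.E (face σ₀ i.1) m :=
      (Submodule.mem_iInf _).1 (Submodule.mem_inf.1 hy).2 i
    exact ⟨K, hK1 ▸ this⟩
  choose Kf hKf using hKex
  set Kb : Fin (n+1) → ℤ := fun i => if h : i ∈ σ₀.1 then (Kf ⟨i, h⟩ : ℤ) else 0 with hKb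
  have hKb0 : ∀ i, 0 ≤ Kb i := by
    intro i
    by_cases h : i ∈ σ₀.1 <;> simp [Kb, h]
  set T : Finset (Fin (n+1) → ℤ) :=
    (Fintype.piFinset (fun i : Fin (n+1) => Finset.Icc 0 (Kb i))).filter
      (fun c => y ∉ G.E σ₀ (m + rvec σ₀ c)) with hT
  have hTne : T.Nonempty := by
    refine ⟨0, Finset.mem_filter.2 ⟨?_, ?_⟩⟩
    · refine Fintype.mem_piFinset.2 fun i => ?_
      rw [Finset.mem_Icc]
      exact ⟨le_refl _, hKb0 i⟩
    · rw [rvec_zero, add_zero]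
      exact hyn
  obtain ⟨c, hcT, hcmax⟩ := T.exists_maximal hTne
  obtain ⟨hcbox, hcny⟩ := Finset.mem_filter.1 hcT
  have hcbox' : ∀ i, 0 ≤ c i ∧ c i ≤ Kb i := by
    intro i
    have := Fintype.mem_piFinset.1 hcbox i
    rw [Finset.mem_Icc] at this
    exact this
  set m₀ : Fin n → ℤ := m + rvec σ₀ c with hm₀
  have hlem₀ : dualLe n σ₀ m m₀ := by
    intro j hj
    rw [pair_sub, hm₀, pair_add, pair_rvec σ₀ c hj]
    have := (hcbox' j).1
    omega
  refine ⟨m₀, y, F.mono σ₀ m m₀ hlem₀ hyF, hcny, ?_, ?_⟩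
  · -- upward property
    intro i hi
    rcases eq_or_lt_of_le (hcbox' i).2 with hceq | hclt
    · -- c i is maximal : use the attained bound
      refine G.mono σ₀ (m + (Kf ⟨i, hi⟩ : ℤ) • dvec n σ₀ i) (m₀ + dvec n σ₀ i) ?_
        (hKf ⟨i, hi⟩)
      intro j hj
      rw [pair_sub, pair_add, pair_add, pair_add, pair_smul, pair_rvec σ₀ c hj]
      rcases eq_or_ne j i with rfl | hji
      · rw [dvec_self n σ₀ j hi]
        have : c j = Kb j := hceq
        simp only [Kb, dif_pos hi] at this
        omega
      · rw [dvec_other n σ₀ i hi hj hji]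
        have := (hcbox' j).1
        omega
    · -- can increase c i : maximality gives membership
      set c' : Fin (n+1) → ℤ := c + Pi.single i 1 with hc'
      have hc'box : c' ∈ Fintype.piFinset (fun i : Fin (n+1) => Finset.Icc 0 (Kb i)) := by
        refine Fintype.mem_piFinset.2 fun j => ?_
        rw [Finset.mem_Icc]
        have h1 := hcbox' j
        rcases eq_or_ne j i with rfl | hji
        · simp only [c', Pi.add_apply, Pi.single_apply, if_pos rfl]
          omega
        · simp only [c', Pi.add_apply, Pi.single_apply, if_neg hji]
          omega
      have hcc' : c < c' := by
        constructor
        · intro j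
          rcases eq_or_ne j i with rfl | hji
          · simp [c', Pi.single_apply]
          · simp [c', Pi.single_apply, hji]
        · intro hcon
          have := hcon i
          simp [c', Pi.single_apply] at this
      have : c' ∉ T := fun hmem => (not_le_of_gt hcc') (hcmax hmem hcc'.le)
      have hyc' : y ∈ G.E σ₀ (m + rvec σ₀ c') := by
        by_contra hcon
        exact this (Finset.mem_filter.2 ⟨hc'box, hcon⟩)
      have : m + rvec σ₀ c' = m₀ + dvec n σ₀ i := by
        rw [hc', rvec_add, rvec_single σ₀ hi, hm₀]
        abel
      rwa [this] at hyc'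
  · -- m₀ is still a corner
    intro hcon
    have hymem : y ∈ cornerVal G F σ₀ m₀ := by
      refine Submodule.mem_inf.2 ⟨F.mono σ₀ m m₀ hlem₀ hyF, ?_⟩
      refine (Submodule.mem_iInf _).2 fun l => ?_
      have h1 : y ∈ G.E (face σ₀ l.1) m :=
        (Submodule.mem_iInf _).1 (Submodule.mem_inf.1 hy).2 l
      refine G.mono (face σ₀ l.1) m m₀ ?_ h1
      exact dualLe_mono_cone (Finset.erase_subset l.1 σ₀.1) hlem₀
    rw [← hcon] at hymem
    exact hcny hymem

end Corners

-- ### chains of elementary injections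

def ChainTo (G F : MultiFilt n V) (K : ℕ) : Prop :=
  ∃ (p : ℕ) (𝓔 : Fin (p + 1) → MultiFilt n V)
    (kf : Fin p → ℕ) (σf : Fin p → Cone n) (mf : Fin p → Fin n → ℤ),
    𝓔 0 = G ∧ 𝓔 (Fin.last p) = F ∧
    (∀ i : Fin p, IsElementary (𝓔 i.castSucc) (𝓔 i.succ) (kf i) (σf i) (mf i)) ∧
    (∀ i j : Fin p, i ≤ j → kf j ≤ kf i) ∧ (∀ i : Fin p, kf i ≤ K)

lemma chainTo_refl (F : MultiFilt n V) (K : ℕ) : ChainTo F F K := by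
  refine ⟨0, fun _ => F, fun i => i.elim0, fun i => i.elim0, fun i => i.elim0,
    rfl, rfl, fun i => i.elim0, fun i => i.elim0, fun i => i.elim0⟩

lemma chainTo_mono {G F : MultiFilt n V} {K K' : ℕ} (h : ChainTo G F K) (hK : K ≤ K') :
    ChainTo G F K' := by
  obtain ⟨p, 𝓔, kf, σf, mf, h1, h2, h3, h4, h5⟩ := h
  exact ⟨p, 𝓔, kf, σf, mf, h1, h2, h3, h4, fun i => le_trans (h5 i) hK⟩

lemma chainTo_cons {G G' F : MultiFilt n V} {k : ℕ} {σ : Cone n} {m : Fin n → ℤ}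
    (helem : IsElementary G G' k σ m) (h : ChainTo G' F k) : ChainTo G F k := by
  obtain ⟨p, 𝓔, kf, σf, mf, h1, h2, h3, h4, h5⟩ := h
  refine ⟨p + 1, Fin.cases G 𝓔, Fin.cases k kf, Fin.cases σ σf, Fin.cases m mf,
    ?_, ?_, ?_, ?_, ?_⟩
  · exact Fin.cases_zero ..
  · have heq : Fin.last (p + 1) = (Fin.last p).succ := rfl
    simp only [heq, Fin.cases_succ]
    exact h2
  · intro i
    induction i using Fin.cases with
    | zero =>
      have e1 : (0 : Fin (p+1)).castSucc = (0 : Fin (p+2)) := rfl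
      have e2 : (0 : Fin (p+1)).succ = ((0 : Fin (p+1)) : Fin (p+1)).succ := rfl
      rw [e1]
      simp only [Fin.cases_zero, Fin.cases_succ, Fin.succ_zero_eq_one]
      have e3 : (1 : Fin (p+2)) = ((0 : Fin (p+1))).succ := rfl
      rw [e3, Fin.cases_succ]
      rw [h1]
      exact helem
    | succ j =>
      have e1 : (j.succ : Fin (p+1)).castSucc = (j.castSucc : Fin (p+1)).succ := rfl
      have e2 : ((j.succ : Fin (p+1)).succ : Fin (p+2)) = ((j.succ : Fin (p+1)) : Fin (p+1)).succ := rfl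
      rw [e1, e2]
      simp only [Fin.cases_succ]
      exact h3 j
  · intro i j hij
    induction i using Fin.cases with
    | zero =>
      induction j using Fin.cases with
      | zero => exact le_rfl
      | succ j' =>
        simp only [Fin.cases_zero, Fin.cases_succ]
        exact h5 j'
    | succ i' =>
      induction j using Fin.cases with
      | zero =>
        exfalso
        rw [Fin.le_def] at hij
        simp only [Fin.val_succ, Fin.val_zero] at hij
        omega
      | succ j' =>
        simp only [Fin.cases_succ]
        refine h4 i' j' ?_
        rw [Fin.le_def] at hij ⊢
        simp only [Fin.val_succ] at hij
        omega
  · intro i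
    induction i using Fin.cases with
    | zero => exact le_of_eq (by simp only [Fin.cases_zero])
    | succ i' =>
      simp only [Fin.cases_succ]
      exact h5 i'

-- ### the measure

noncomputable def termGF [FiniteDimensional ℂ V] (G F : MultiFilt n V) (σ : Cone n)
    (m : Fin n → ℤ) : ℕ :=
  Module.finrank ℂ (cornerVal G F σ m) - Module.finrank ℂ (G.E σ m)

noncomputable def boxSig (σ : Cone n) (L U : ℤ) : Finset (Fin (n+1) → ℤ) :=
  Fintype.piFinset (fun i => if i ∈ σ.1 then Finset.Icc L U else {0})

noncomputable def conesK (n : ℕ) (k : ℕ) : Finset (Cone n) :=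
  Finset.univ.filter (fun σ => σ.1.card = k)

noncomputable def muGF [FiniteDimensional ℂ V] (G F : MultiFilt n V) (k : ℕ) (L U : ℤ) : ℕ :=
  ∑ σ ∈ conesK n k, ∑ c ∈ boxSig σ L U, termGF G F σ (rvec σ c)

section Mu

variable [FiniteDimensional ℂ V] (G F : MultiFilt n V)
variable (hGF : ∀ σ m, G.E σ m ≤ F.E σ m)

include hGF in
lemma term_zero_iff (σ : Cone n) (m : Fin n → ℤ) :
    termGF G F σ m = 0 ↔ G.E σ m = cornerVal G F σ m := by
  constructor
  · intro h
    refine Submodule.eq_of_le_of_finrank_le (cornerVal_ge G F hGF σ m) ?_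
    unfold termGF at h
    omega
  · intro h
    unfold termGF
    rw [← h]
    omega

include hGF in
lemma term_pos (σ : Cone n) (m : Fin n → ℤ) (h : G.E σ m ≠ cornerVal G F σ m) :
    1 ≤ termGF G F σ m := by
  have hlt : G.E σ m < cornerVal G F σ m :=
    lt_of_le_of_ne (cornerVal_ge G F hGF σ m) h
  have := Submodule.finrank_lt_finrank_of_lt hlt
  unfold termGF
  omega

include hGF in
lemma mu_box_eq {k : ℕ} {L U L2 U2 : ℤ} (hL : L2 ≤ L) (hU : U ≤ U2)
    (hcor : ∀ σ : Cone n, σ.1.card = k → ∀ m, G.E σ m ≠ cornerVal G F σ m →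
      ∀ i ∈ σ.1, L ≤ pair n m i ∧ pair n m i ≤ U) :
    muGF G F k L2 U2 = muGF G F k L U := by
  unfold muGF
  refine Finset.sum_congr rfl fun σ hσ => ?_
  have hσk : σ.1.card = k := (Finset.mem_filter.1 hσ).2
  refine (Finset.sum_subset ?_ ?_).symm
  · intro c hc
    refine Fintype.mem_piFinset.2 fun i => ?_
    have := Fintype.mem_piFinset.1 hc i
    by_cases hiσ : i ∈ σ.1
    · rw [if_pos hiσ] at this ⊢
      rw [Finset.mem_Icc] at this ⊢
      omega
    · rw [if_neg hiσ] at this ⊢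
      exact this
  · intro c hc hcn
    by_contra hterm
    have hcorm : G.E σ (rvec σ c) ≠ cornerVal G F σ (rvec σ c) := by
      intro heq
      exact hterm ((term_zero_iff G F hGF σ (rvec σ c)).2 heq)
    refine hcn (Fintype.mem_piFinset.2 fun i => ?_)
    have hmem := Fintype.mem_piFinset.1 hc i
    by_cases hiσ : i ∈ σ.1
    · rw [if_pos hiσ]
      rw [Finset.mem_Icc]
      have := hcor σ hσk (rvec σ c) hcorm i hiσ
      rw [pair_rvec σ c hiσ] at this
      exact this
    · rw [if_neg hiσ] at hmem ⊢
      exact hmem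

end Mu

section MuStep

variable [FiniteDimensional ℂ V]
variable (G F : MultiFilt n V) (σ₀ : Cone n) (m₀ : Fin n → ℤ) (x : V)
variable (hGF : ∀ σ m, G.E σ m ≤ F.E σ m)
variable (hdom : Dominated G F σ₀.1.card)
variable (hx1 : x ∈ F.E σ₀ m₀) (hx2 : x ∉ G.E σ₀ m₀)
variable (hB : ∀ i ∈ σ₀.1, x ∈ G.E σ₀ (m₀ + dvec n σ₀ i))
variable (hσ₀ne : σ₀.1.Nonempty)

include hGF hdom hx1 hx2 hB hσ₀ne

lemma mu_step (hcor₀ : G.E σ₀ m₀ ≠ cornerVal G F σ₀ m₀) {L U : ℤ}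
    (hbox : ∀ i ∈ σ₀.1, L ≤ pair n m₀ i ∧ pair n m₀ i ≤ U) :
    muGF (moveMF G F σ₀ m₀ x hGF hdom hx1 hx2 hB hσ₀ne) F σ₀.1.card L U
      < muGF G F σ₀.1.card L U := by
  classical
  set G' := moveMF G F σ₀ m₀ x hGF hdom hx1 hx2 hB hσ₀ne with hG'
  have helem : IsElementary G G' σ₀.1.card σ₀ m₀ :=
    mv_elementary G F σ₀ m₀ x hGF hdom hx1 hx2 hB hσ₀ne
  have hCV : ∀ σ : Cone n, σ.1.card = σ₀.1.card → ∀ m,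
      cornerVal G' F σ m = cornerVal G F σ m := by
    intro σ hσk m
    unfold cornerVal
    congr 1
    refine iInf_congr fun l => ?_
    refine (helem.eq_of_lt (face σ l.1) m ?_).symm
    rw [← hσk]
    exact Finset.card_erase_lt_of_mem l.2
  have hterm_le : ∀ σ : Cone n, σ.1.card = σ₀.1.card → ∀ m,
      termGF G' F σ m ≤ termGF G F σ m := by
    intro σ hσk m
    unfold termGF
    rw [hCV σ hσk m]
    have := Submodule.finrank_mono (helem.le σ m)
    omega
  unfold muGF
  refine Finset.sum_lt_sum ?_ ⟨σ₀, ?_, ?_⟩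
  · intro σ hσ
    refine Finset.sum_le_sum fun c hc => ?_
    exact hterm_le σ (Finset.mem_filter.1 hσ).2 _
  · exact Finset.mem_filter.2 ⟨Finset.mem_univ σ₀, rfl⟩
  · -- the inner sum at σ₀ strictly decreases
    set cstar : Fin (n+1) → ℤ := fun i => if i ∈ σ₀.1 then pair n m₀ i else 0 with hcstar
    have hcmem : cstar ∈ boxSig σ₀ L U := by
      refine Fintype.mem_piFinset.2 fun i => ?_
      by_cases hiσ : i ∈ σ₀.1
      · rw [if_pos hiσ]
        simp only [cstar, if_pos hiσ]
        rw [Finset.mem_Icc]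
        exact hbox i hiσ
      · rw [if_neg hiσ]
        simp only [cstar, if_neg hiσ]
        exact Finset.mem_singleton_self 0
    refine Finset.sum_lt_sum (fun c hc => hterm_le σ₀ rfl _) ⟨cstar, hcmem, ?_⟩
    set m' : Fin n → ℤ := rvec σ₀ cstar with hm'
    have hperp : inPerp n σ₀ (m' - m₀) := by
      intro j hj
      rw [pair_sub, hm', pair_rvec σ₀ cstar hj]
      simp only [cstar, if_pos hj]
      ring
    have hGm' : G.E σ₀ m' = G.E σ₀ m₀ := by
      refine mf_congr G σ₀ ?_
      intro j hj
      have := hperp j hj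
      rw [pair_sub] at *
      omega
    have hG'm' : G'.E σ₀ m' = G.E σ₀ m' ⊔ (ℂ ∙ x) := mv_coset G F σ₀ m₀ x hperp
    have hxn : x ∉ G.E σ₀ m' := by
      rw [hGm']
      exact hx2
    have hcorm' : G.E σ₀ m' ≠ cornerVal G F σ₀ m' := by
      rw [hGm', ← cornerVal_congr G F σ₀ hperp]
      exact hcor₀
    have ht1 : 1 ≤ termGF G F σ₀ m' := term_pos G F hGF σ₀ m' hcorm'
    unfold termGF at ht1 ⊢
    rw [hCV σ₀ rfl m', hG'm', finrank_sup_span hxn]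
    omega

lemma mu_move_lt (hcor₀ : G.E σ₀ m₀ ≠ cornerVal G F σ₀ m₀) :
    muGF (moveMF G F σ₀ m₀ x hGF hdom hx1 hx2 hB hσ₀ne) F σ₀.1.card
        (Lb (moveMF G F σ₀ m₀ x hGF hdom hx1 hx2 hB hσ₀ne) F 0)
        (Ub (moveMF G F σ₀ m₀ x hGF hdom hx1 hx2 hB hσ₀ne) F 0)
      < muGF G F σ₀.1.card (Lb G F 0) (Ub G F 0) := by
  set G' := moveMF G F σ₀ m₀ x hGF hdom hx1 hx2 hB hσ₀ne with hG'
  have hGF' : ∀ σ m, G'.E σ m ≤ F.E σ m := mv_le_F' G F σ₀ m₀ x hGF hdom hx1 hx2 hB hσ₀ne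
  set L : ℤ := min (Lb G F 0) (Lb G' F 0) with hL
  set U : ℤ := max (Ub G F 0) (Ub G' F 0) with hU
  have e1 : muGF G' F σ₀.1.card L U = muGF G' F σ₀.1.card (Lb G' F 0) (Ub G' F 0) :=
    mu_box_eq G' F hGF' (min_le_right _ _) (le_max_right _ _)
      (fun σ _ m hc => corner_bounds G' F hGF' σ m hc)
  have e2 : muGF G F σ₀.1.card L U = muGF G F σ₀.1.card (Lb G F 0) (Ub G F 0) :=
    mu_box_eq G F hGF (min_le_left _ _) (le_max_left _ _)
      (fun σ _ m hc => corner_bounds G F hGF σ m hc)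
  have e3 : muGF G' F σ₀.1.card L U < muGF G F σ₀.1.card L U := by
    refine mu_step G F σ₀ m₀ x hGF hdom hx1 hx2 hB hσ₀ne hcor₀ ?_
    intro i hi
    have := corner_bounds G F hGF σ₀ m₀ hcor₀ i hi
    constructor
    · exact le_trans (min_le_left _ _) this.1
    · exact le_trans this.2 (le_max_left _ _)
  rw [e1, e2] at e3
  exact e3

end MuStep

-- ### the master induction

lemma master [FiniteDimensional ℂ V] (F : MultiFilt n V) :
    ∀ (k : ℕ) (G : MultiFilt n V), (∀ σ m, G.E σ m ≤ F.E σ m) → Dominated G F k →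
      ChainTo G F k := by
  intro k
  induction k using Nat.strong_induction_on with
  | _ k IHk =>
    suffices h : ∀ (b : ℕ) (G : MultiFilt n V), (∀ σ m, G.E σ m ≤ F.E σ m) →
        Dominated G F k → muGF G F k (Lb G F 0) (Ub G F 0) ≤ b → ChainTo G F k by
      intro G h1 h2
      exact h _ G h1 h2 le_rfl
    intro b
    induction b using Nat.strong_induction_on with
    | _ b IHb =>
      intro G hGF hdom hmu
      by_cases hall : ∀ σ : Cone n, σ.1.card = k → ∀ m, G.E σ m = cornerVal G F σ m
      · rcases Nat.eq_zero_or_pos k with rfl | hk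
        · have hfin : G = F := dom_eq G F hdom
          rw [hfin]
          exact chainTo_refl F 0
        · have hdom' : Dominated G F (k-1) := by
            intro σ hgt m
            rcases eq_or_ne σ.1.card k with hck | hck
            · exact hall σ hck m
            · exact hdom σ (by omega) m
          exact chainTo_mono (IHk (k-1) (by omega) G hGF hdom') (by omega)
      · push_neg at hall
        obtain ⟨σ₀, hcard, m, hcor⟩ := hall
        have hk1 : 1 ≤ k := by
          by_contra hcon
          push_neg at hcon
          exact hcor (corner_empty G F σ₀ (by omega) m)
        have hσ₀ne : σ₀.1.Nonempty := Finset.card_pos.1 (by omega)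
        obtain ⟨m₀, x, hx1, hx2, hB, hcor₀⟩ := corner_extract G F hGF σ₀ m hcor
        have hdomσ : Dominated G F σ₀.1.card := by rw [hcard]; exact hdom
        have hGF' : ∀ σ m', (moveMF G F σ₀ m₀ x hGF hdomσ hx1 hx2 hB hσ₀ne).E σ m'
            ≤ F.E σ m' := mv_le_F' G F σ₀ m₀ x hGF hdomσ hx1 hx2 hB hσ₀ne
        have hdom' : Dominated (moveMF G F σ₀ m₀ x hGF hdomσ hx1 hx2 hB hσ₀ne) F k := by
          rw [← hcard]
          exact mv_dom G F σ₀ m₀ x hGF hdomσ hx1 hx2 hB hσ₀ne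
        have helem' : IsElementary G (moveMF G F σ₀ m₀ x hGF hdomσ hx1 hx2 hB hσ₀ne)
            k σ₀ m₀ := by
          rw [← hcard]
          exact mv_elementary G F σ₀ m₀ x hGF hdomσ hx1 hx2 hB hσ₀ne
        have hlt := mu_move_lt G F σ₀ m₀ x hGF hdomσ hx1 hx2 hB hσ₀ne hcor₀
        rw [hcard] at hlt
        have hchain := IHb (muGF (moveMF G F σ₀ m₀ x hGF hdomσ hx1 hx2 hB hσ₀ne) F k
            (Lb (moveMF G F σ₀ m₀ x hGF hdomσ hx1 hx2 hB hσ₀ne) F 0)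
            (Ub (moveMF G F σ₀ m₀ x hGF hdomσ hx1 hx2 hB hσ₀ne) F 0))
          (by omega) (moveMF G F σ₀ m₀ x hGF hdomσ hx1 hx2 hB hσ₀ne) hGF' hdom' le_rfl
        exact chainTo_cons helem' hchain


/-- Theorem: factorization through elementary injections.
Any pointwise injection `E ⊆ F` of families of multifiltrations of the same finite-dimensional
vector space `V` factorizes through finitely many elementary injections, with nonincreasing
dimension parameters. -/
theorem stmt0 (n : ℕ) (hn : 1 ≤ n) (V : Type) [AddCommGroup V] [Module ℂ V]
    [FiniteDimensional ℂ V] (E F : MultiFilt n V) (hEF : ∀ σ m, E.E σ m ≤ F.E σ m) :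
    ∃ (p : ℕ) (𝓔 : Fin (p + 1) → MultiFilt n V)
      (k : Fin p → ℕ) (σ₀ : Fin p → Cone n) (m₀ : Fin p → Fin n → ℤ),
      𝓔 0 = E ∧ 𝓔 (Fin.last p) = F ∧
      (∀ i : Fin p, IsElementary (𝓔 i.castSucc) (𝓔 i.succ) (k i) (σ₀ i) (m₀ i)) ∧
      ∀ i j : Fin p, i ≤ j → k j ≤ k i := by
  have hdom : Dominated E F n := by
    intro σ hgt m
    exfalso
    have h1 : σ.1.card < n + 1 := by
      have h2 := Finset.card_lt_card
        (Finset.ssubset_iff_subset_ne.2 ⟨Finset.subset_univ σ.1, σ.2⟩)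
      simpa using h2
    omega
  obtain ⟨p, 𝓔, kf, σf, mf, h1, h2, h3, h4, h5⟩ := master F n E hEF hdom
  exact ⟨p, 𝓔, kf, σf, mf, h1, h2, h3, h4⟩


end Toric
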